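/- arXiv:2504.06844 — 10 statements merged into one kernel-verified Lean document; each statement's English description precedes it below -/
import Mathlib

section
/- Let p ≥ 5 be a prime and k ≥ 2 an integer, and set N = ((p−1)/2)·k + 1. Let δ be the p-cycle on {1,…,N} through the sequence 1, k+1, 2k+1, …, ((p−1)/2)k+1, ((p−1)/2)k, ((p−3)/2)k, …, k; explicitly, δ maps jk+1 to (j+1)k+1 for 0 ≤ j ≤ (p−3)/2, maps ((p−1)/2)k+1 to ((p−1)/2)k, maps jk to (j−1)k for 2 ≤ j ≤ (p−1)/2, maps k to 1, and fixes all other points of {1,…,N}. Then for every natural number x, max( l_∞(δ, δ^x), l_∞(id, δ^x) ) ≤ k if and only if x ≡ 0 (mod p) or x ≡ 1 (mod p). -/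
def cyc (p m k t : ℕ) : ℕ := if t ≤ m then t * k + 1 else (p - t) * k

lemma cyc_le {p m k t : ℕ} (h : t ≤ m) : cyc p m k t = t * k + 1 := if_pos h

lemma cyc_gt {p m k t : ℕ} (h : m < t) : cyc p m k t = (p - t) * k := if_neg (by omega)

/-- Let `p ≥ 5` be a prime, `k ≥ 2`, `N = ((p-1)/2)·k + 1`, and let `δ` be the `p`-cycle
on `{1,…,N}` through `1, k+1, 2k+1, …, ((p-1)/2)k+1, ((p-1)/2)k, ((p-3)/2)k, …, k`
(viewed as a permutation of `ℕ` fixing all other points).  Then for every `x : ℕ`,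
`max(l_∞(δ, δ^x), l_∞(id, δ^x)) ≤ k` iff `x ≡ 0` or `1 (mod p)`. -/
theorem stmt4 (p k N : ℕ) (hp : p.Prime) (hp5 : 5 ≤ p) (hk : 2 ≤ k)
    (hN : N = ((p - 1) / 2) * k + 1)
    (δ : Equiv.Perm ℕ)
    (h1 : ∀ j, j ≤ (p - 3) / 2 → δ (j * k + 1) = (j + 1) * k + 1)
    (h2 : δ (((p - 1) / 2) * k + 1) = ((p - 1) / 2) * k)
    (h3 : ∀ j, 2 ≤ j → j ≤ (p - 1) / 2 → δ (j * k) = (j - 1) * k)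
    (h4 : δ k = 1)
    (h5 : ∀ i, (∀ j, j ≤ (p - 1) / 2 → i ≠ j * k + 1) →
      (∀ j, 1 ≤ j → j ≤ (p - 1) / 2 → i ≠ j * k) → δ i = i)
    (x : ℕ) :
    ((∀ i, 1 ≤ i → i ≤ N → |((δ i : ℤ)) - (((δ ^ x) i : ℕ) : ℤ)| ≤ (k : ℤ)) ∧
     (∀ i, 1 ≤ i → i ≤ N → |((i : ℤ)) - (((δ ^ x) i : ℕ) : ℤ)| ≤ (k : ℤ)))
    ↔ (x % p = 0 ∨ x % p = 1) := by
  obtain ⟨m, hpm⟩ : Odd p := hp.odd_of_ne_two (by omega)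
  have hm : (p - 1) / 2 = m := by omega
  have hm3 : (p - 3) / 2 = m - 1 := by omega
  have hm2 : 2 ≤ m := by omega
  have hk' : (2:ℤ) ≤ k := by exact_mod_cast hk
  rw [hm] at hN h2 h3 h5
  rw [hm3] at h1
  -- the step lemma: δ advances the cycle position by one
  have step : ∀ t, t < p → δ (cyc p m k t) = cyc p m k ((t + 1) % p) := by
    intro t ht
    by_cases hA : t < m
    · rw [cyc_le (by omega), Nat.mod_eq_of_lt (by omega), cyc_le (by omega)]
      exact h1 t (by omega)
    · by_cases hB : t = m
      · rw [hB]
        rw [cyc_le le_rfl, Nat.mod_eq_of_lt (by omega), cyc_gt (by omega), h2]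
        congr 1
        omega
      · by_cases hC : t < 2 * m
        · rw [cyc_gt (by omega), Nat.mod_eq_of_lt (by omega), cyc_gt (by omega)]
          rw [h3 (p - t) (by omega) (by omega)]
          congr 1
        · have ht2 : t = 2 * m := by omega
          subst ht2
          rw [cyc_gt (by omega), show p - 2*m = 1 by omega, one_mul,
              show (2*m+1) % p = 0 by rw [← hpm]; exact Nat.mod_self p,
              cyc_le (Nat.zero_le m)]
          simpa using h4
  have powl : ∀ y t, t < p → (δ ^ y) (cyc p m k t) = cyc p m k ((t + y) % p) := by
    intro y
    induction y with
    | zero => intro t ht; simp [Nat.mod_eq_of_lt ht]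
    | succ n ih =>
      intro t ht
      rw [pow_succ', Equiv.Perm.mul_apply, ih t ht,
          step _ (Nat.mod_lt _ (by omega))]
      congr 1
      conv_rhs => rw [show t + (n+1) = (t+n) + 1 from rfl, Nat.add_mod]
      rw [Nat.mod_eq_of_lt (show 1 < p by omega)]
  -- adjacent values on the cycle differ by at most k
  have adj : ∀ t, t < p → |((cyc p m k ((t+1) % p) : ℤ)) - (cyc p m k t : ℤ)| ≤ (k:ℤ) := by
    intro t ht
    by_cases hA : t < m
    · rw [Nat.mod_eq_of_lt (by omega), cyc_le (by omega), cyc_le (by omega),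
          show (((t+1) * k + 1 : ℕ) : ℤ) - ((t * k + 1 : ℕ) : ℤ) = (k:ℤ) by push_cast; ring,
          abs_of_nonneg (by positivity)]
    · by_cases hB : t = m
      · rw [hB]
        rw [Nat.mod_eq_of_lt (by omega), cyc_gt (by omega), cyc_le le_rfl,
            show p - (m+1) = m from by omega,
            show ((m * k : ℕ) : ℤ) - ((m * k + 1 : ℕ) : ℤ) = -1 by push_cast; ring]
        rw [abs_neg, abs_one]
        omega
      · by_cases hC : t < 2*m
        · rw [Nat.mod_eq_of_lt (by omega), cyc_gt (by omega), cyc_gt (by omega),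
              show p - t = (p - (t+1)) + 1 from by omega]
          rw [show (((p-(t+1)) * k : ℕ) : ℤ) - ((((p-(t+1))+1) * k : ℕ) : ℤ) = -(k:ℤ) by
                push_cast; ring,
              abs_neg, abs_of_nonneg (by positivity)]
        · have ht2 : t = 2*m := by omega
          subst ht2
          rw [show (2*m+1) % p = 0 from by rw [← hpm]; exact Nat.mod_self p,
              cyc_le (Nat.zero_le m), cyc_gt (by omega),
              show p - 2*m = 1 from by omega, one_mul,
              show ((0 * k + 1 : ℕ) : ℤ) - (k:ℤ) = -((k:ℤ)-1) by push_cast; ring,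
              abs_neg, abs_of_nonneg (by omega)]
          omega
  -- the only cycle positions within k of 1 are 0, 1, p-1
  have forced : ∀ s, s < p → |(1:ℤ) - (cyc p m k s : ℤ)| ≤ (k:ℤ) → s = 0 ∨ s = 1 ∨ s = p - 1 := by
    intro s hs h
    by_cases hA : s ≤ m
    · rw [cyc_le hA,
          show (1:ℤ) - ((s * k + 1 : ℕ):ℤ) = -((s:ℤ) * k) by push_cast; ring,
          abs_neg, abs_of_nonneg (by positivity)] at h
      have hs1 : s ≤ 1 := by
        by_contra hcon
        have h2s : (2:ℤ) ≤ s := by exact_mod_cast (by omega : 2 ≤ s)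
        nlinarith
      omega
    · rw [cyc_gt (by omega)] at h
      right; right
      by_contra hcon
      have h2s : 2 ≤ p - s := by omega
      have hge : (2:ℤ) * k ≤ ((p - s) * k : ℕ) := by
        exact_mod_cast Nat.mul_le_mul_right k h2s
      have := abs_le.mp h
      linarith [this.1]
  have fix_pow : ∀ i, δ i = i → ∀ y, (δ ^ y) i = i := by
    intro i hi y
    induction y with
    | zero => simp
    | succ n ih => rw [pow_succ, Equiv.Perm.mul_apply, hi, ih]
  have cases_i : ∀ i : ℕ, (∃ t, t < p ∧ cyc p m k t = i) ∨ δ i = i := by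
    intro i
    by_cases hc : ∃ t, t < p ∧ cyc p m k t = i
    · exact Or.inl hc
    · right
      apply h5
      · intro j hj hij
        exact hc ⟨j, by omega, by rw [cyc_le hj, ← hij]⟩
      · intro j hj1 hjm hij
        refine hc ⟨p - j, by omega, ?_⟩
        rw [cyc_gt (by omega), show p - (p - j) = j from by omega, ← hij]
  constructor
  · rintro ⟨H1, H2⟩
    have hx1 : (δ ^ x) 1 = cyc p m k (x % p) := by
      have := powl x 0 (by omega)
      rw [cyc_le (Nat.zero_le m)] at this
      simpa using this
    have hb := H2 1 le_rfl (by omega)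
    rw [hx1] at hb
    push_cast at hb
    rcases forced (x % p) (Nat.mod_lt x (by omega)) hb with h0 | h1' | hlast
    · exact Or.inl h0
    · exact Or.inr h1'
    · exfalso
      have hkN : k ≤ N := by
        have : 2 * k ≤ m * k := Nat.mul_le_mul_right k hm2
        omega
      have hxk : (δ ^ x) k = cyc p m k ((2*m + x) % p) := by
        have := powl x (2*m) (by omega)
        rw [cyc_gt (by omega), show p - 2*m = 1 from by omega, one_mul] at this
        exact this
      have hmod : (2*m + x) % p = 2*m - 1 := by
        rw [Nat.add_mod, Nat.mod_eq_of_lt (show 2*m < p by omega), hlast,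
            show 2*m + (p-1) = p + (2*m-1) from by omega, Nat.add_mod_left,
            Nat.mod_eq_of_lt (by omega)]
      rw [hmod, cyc_gt (by omega), show p - (2*m-1) = 2 from by omega] at hxk
      have hc := H1 k (by omega) hkN
      rw [h4, hxk] at hc
      push_cast at hc
      have := abs_le.mp hc
      linarith [this.1]
  · intro hx
    constructor <;> intro i hi1 hiN <;> rcases cases_i i with ⟨t, htp, hti⟩ | hfix
    · subst hti
      rcases hx with h0 | hx1
      · have hmod0 : (t + x) % p = t := by
          rw [Nat.add_mod, h0, Nat.mod_eq_of_lt htp, add_zero, Nat.mod_eq_of_lt htp]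
        rw [step t htp, powl x t htp, hmod0]
        exact adj t htp
      · have hmod1 : (t + x) % p = (t + 1) % p := by
          conv_lhs => rw [Nat.add_mod]
          rw [hx1, Nat.mod_eq_of_lt htp]
        rw [step t htp, powl x t htp, hmod1, sub_self, abs_zero]
        positivity
    · rw [hfix, fix_pow i hfix x, sub_self, abs_zero]
      positivity
    · subst hti
      rcases hx with h0 | hx1
      · have hmod0 : (t + x) % p = t := by
          rw [Nat.add_mod, h0, Nat.mod_eq_of_lt htp, add_zero, Nat.mod_eq_of_lt htp]
        rw [powl x t htp, hmod0, sub_self, abs_zero]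
        positivity
      · have hmod1 : (t + x) % p = (t + 1) % p := by
          conv_lhs => rw [Nat.add_mod]
          rw [hx1, Nat.mod_eq_of_lt htp]
        rw [powl x t htp, hmod1, abs_sub_comm]
        exact adj t htp
    · rw [fix_pow i hfix x, sub_self, abs_zero]
      positivity
end

section
/- Let α, β ∈ S_n, let α = α_1 ⋯ α_d be the disjoint cycle decomposition of α, and let a_i denote the length of the cycle α_i. Let X = { x ∈ ℤ : l_∞(β, α^x) ≤ 1 }. Then for every i ∈ {1,…,d} there exist numbers y_1, y_2 with 0 ≤ y_1, y_2 < a_i such that every x ∈ X satisfies x ≡ y_1 (mod a_i) or x ≡ y_2 (mod a_i). -/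
/-!
Let `S` be the support of the cycle, `a = #S`, and `m` the least point of `S`; `α` permutes `S`
cyclically. For `x ∈ X` put `jₓ = α⁻ˣ m ∈ S`: then `β jₓ` lies within `1` of `αˣ jₓ = m`, and
`jₓ` determines `x` modulo `a`. If `β j = m - 1` for some `j ∈ S`, then `αˣ j ∈ S` is at least
`m` and within `1` of `m - 1`, so `αˣ j = m` for every `x ∈ X`, and `X` is a single residue
class. Otherwise `β jₓ ∈ {m, m + 1}`, so `β` injective leaves room for at most two classes.
-/

open Equiv Equiv.Perm Finset

def LInftyLEOne {n : ℕ} (β σ : Perm (Fin n)) : Prop :=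
  ∀ i, |((β i : ℕ) : ℤ) - ((σ i : ℕ) : ℤ)| ≤ 1

theorem Int.exists_natCast_lt_modEq {a : ℕ} (ha : 0 < a) (x : ℤ) :
    ∃ y : ℕ, y < a ∧ x ≡ y [ZMOD a] := by
  have hnonneg := Int.emod_nonneg x (by omega : (a : ℤ) ≠ 0)
  have hlt := Int.emod_lt_of_pos x (by omega : (0 : ℤ) < a)
  refine ⟨(x % a).toNat, by omega, ?_⟩
  rw [Int.toNat_of_nonneg hnonneg]
  exact (Int.mod_modEq x a).symm

theorem Int.exists_two_residues_of_forall_three_modEq {a : ℕ} (ha : 0 < a) {P : ℤ → Prop}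
    (h : ∀ x₁ x₂ x₃, P x₁ → P x₂ → P x₃ →
      x₁ ≡ x₂ [ZMOD a] ∨ x₁ ≡ x₃ [ZMOD a] ∨ x₂ ≡ x₃ [ZMOD a]) :
    ∃ y₁ y₂ : ℕ, y₁ < a ∧ y₂ < a ∧ ∀ x, P x → x ≡ y₁ [ZMOD a] ∨ x ≡ y₂ [ZMOD a] := by
  by_contra! hcon
  obtain ⟨x₁, hx₁, -⟩ := hcon 0 0 ha ha
  obtain ⟨y₁, hy₁, h₁⟩ := Int.exists_natCast_lt_modEq ha x₁
  obtain ⟨x₂, hx₂, h₂₁, -⟩ := hcon y₁ y₁ hy₁ hy₁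
  obtain ⟨y₂, hy₂, h₂⟩ := Int.exists_natCast_lt_modEq ha x₂
  obtain ⟨x₃, hx₃, h₃₁, h₃₂⟩ := hcon y₁ y₂ hy₁ hy₂
  rcases h x₁ x₂ x₃ hx₁ hx₂ hx₃ with h | h | h
  · exact h₂₁ (h.symm.trans h₁)
  · exact h₃₁ (h.symm.trans h₁)
  · exact h₃₂ (h.symm.trans h₂)

namespace Equiv.Perm.IsCycleOn

theorem zpow_apply_mem {ι : Type*} {σ : Perm ι} {s : Set ι} (hσ : σ.IsCycleOn s) {j : ι}
    (hj : j ∈ s) (x : ℤ) : (σ ^ x) j ∈ s :=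
  (hσ.1.perm_zpow x).mapsTo hj

variable {n : ℕ} {σ β : Perm (Fin n)} {s : Finset (Fin n)}

theorem zpow_apply_eq_min'_of_apply_eq_min'_sub_one (hσ : σ.IsCycleOn s) (hs : s.Nonempty)
    {j : Fin n} (hj : j ∈ s) (hβj : ((β j : ℕ) : ℤ) = ((s.min' hs : ℕ) : ℤ) - 1) {x : ℤ}
    (hx : LInftyLEOne β (σ ^ x)) : (σ ^ x) j = s.min' hs := by
  have hge : s.min' hs ≤ (σ ^ x) j := s.min'_le _ (hσ.zpow_apply_mem hj x)
  have hnear := hx j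
  rw [hβj, abs_le] at hnear
  exact Fin.ext (by rw [Fin.le_def] at hge; omega)

theorem modEq_or_modEq_or_modEq (hσ : σ.IsCycleOn s) (hs : s.Nonempty) {x₁ x₂ x₃ : ℤ}
    (h₁ : LInftyLEOne β (σ ^ x₁)) (h₂ : LInftyLEOne β (σ ^ x₂)) (h₃ : LInftyLEOne β (σ ^ x₃)) :
    x₁ ≡ x₂ [ZMOD #s] ∨ x₁ ≡ x₃ [ZMOD #s] ∨ x₂ ≡ x₃ [ZMOD #s] := by
  set m := s.min' hs
  have hm : m ∈ s := s.min'_mem hs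
  let v (x : ℤ) : ℤ := ((β ((σ ^ (-x)) m) : ℕ) : ℤ)
  have hnear : ∀ x, LInftyLEOne β (σ ^ x) → |v x - (m : ℕ)| ≤ 1 := by
    intro x hx
    have h := hx ((σ ^ (-x)) m)
    rwa [← Perm.mul_apply (σ ^ x), ← zpow_add, add_neg_cancel, zpow_zero, one_apply] at h
  have hinj : ∀ x y, v x = v y → x ≡ y [ZMOD #s] := by
    intro x y hxy
    have hβ : β ((σ ^ (-x)) m) = β ((σ ^ (-y)) m) := Fin.ext (Nat.cast_injective hxy)
    simpa using ((hσ.zpow_apply_eq_zpow_apply hm).1 (β.injective hβ)).neg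
  by_cases hpred : ∃ j ∈ s, ((β j : ℕ) : ℤ) = (m : ℕ) - 1
  · obtain ⟨j, hj, hβj⟩ := hpred
    left
    exact (hσ.zpow_apply_eq_zpow_apply hj).1
      ((hσ.zpow_apply_eq_min'_of_apply_eq_min'_sub_one hs hj hβj h₁).trans
        (hσ.zpow_apply_eq_min'_of_apply_eq_min'_sub_one hs hj hβj h₂).symm)
  · have hne : ∀ x, v x ≠ (m : ℕ) - 1 := fun x h ↦ hpred ⟨_, hσ.zpow_apply_mem hm (-x), h⟩
    have v₁ := abs_le.1 (hnear x₁ h₁)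
    have v₂ := abs_le.1 (hnear x₂ h₂)
    have v₃ := abs_le.1 (hnear x₃ h₃)
    have hpigeon : v x₁ = v x₂ ∨ v x₁ = v x₃ ∨ v x₂ = v x₃ := by
      have := hne x₁; have := hne x₂; have := hne x₃; omega
    rcases hpigeon with h | h | h
    · exact Or.inl (hinj x₁ x₂ h)
    · exact Or.inr (Or.inl (hinj x₁ x₃ h))
    · exact Or.inr (Or.inr (hinj x₂ x₃ h))

theorem exists_two_residues (hσ : σ.IsCycleOn s) (hs : s.Nonempty) (β : Perm (Fin n)) :
    ∃ y₁ y₂ : ℕ, y₁ < #s ∧ y₂ < #s ∧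
      ∀ x : ℤ, LInftyLEOne β (σ ^ x) → x ≡ y₁ [ZMOD #s] ∨ x ≡ y₂ [ZMOD #s] :=
  Int.exists_two_residues_of_forall_three_modEq hs.card_pos
    fun _ _ _ ↦ hσ.modEq_or_modEq_or_modEq hs

end Equiv.Perm.IsCycleOn

/-- Let `α, β ∈ S_n` and let `c` be one of the cycle factors of the disjoint cycle
decomposition of `α`, of length `a = c.support.card`.  Then there are `y₁, y₂` with
`0 ≤ y₁, y₂ < a` such that every integer `x` with `l_∞(β, α^x) ≤ 1` satisfies
`x ≡ y₁ (mod a)` or `x ≡ y₂ (mod a)`. -/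
theorem stmt5 (n : ℕ) (α β : Equiv.Perm (Fin n))
    (c : Equiv.Perm (Fin n)) (hc : c ∈ α.cycleFactorsFinset) :
    ∃ y₁ y₂ : ℕ, y₁ < c.support.card ∧ y₂ < c.support.card ∧
      ∀ x : ℤ, (∀ i : Fin n, |((β i : ℕ) : ℤ) - (((α ^ x) i : ℕ) : ℤ)| ≤ 1) →
        ((x : ℤ) ≡ (y₁ : ℤ) [ZMOD (c.support.card : ℤ)] ∨
         (x : ℤ) ≡ (y₂ : ℤ) [ZMOD (c.support.card : ℤ)]) :=
  (isCycleOn_support_of_mem_cycleFactorsFinset hc).exists_two_residues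
    (mem_cycleFactorsFinset_iff.mp hc).1.nonempty_support β
end

section
/- Let l ≥ 3 be an integer, let a ∈ {0,…,l−1}, and let x be a natural number. Then l_∞([[l]]^a, [[l]]^x) ≤ 1 if and only if x ≡ a (mod l). -/
lemma powRot (n k : ℕ) (i : Fin (n+1)) :
    ((((finRotate (n+1)) ^ k) i : Fin (n+1)) : ℕ) = (i.val + k) % (n+1) := by
  induction k with
  | zero => simp [Nat.mod_eq_of_lt i.isLt]
  | succ k ih =>
      rw [pow_succ', Equiv.Perm.mul_apply, finRotate_succ_apply, Fin.val_add, ih,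
          Fin.val_one', ← Nat.add_mod, Nat.add_assoc]

lemma modCases (l u v : ℕ) (hu : u < l) (hv : v < l) :
    (u + v) % l = if u + v < l then u + v else u + v - l := by
  split_ifs with h
  · exact Nat.mod_eq_of_lt h
  · rw [Nat.mod_eq_sub_mod (by omega), Nat.mod_eq_of_lt (by omega)]

/-- For the `l`-cycle `[[l]]` (realized as `finRotate l`), `l ≥ 3`, `0 ≤ a ≤ l-1` and
`x : ℕ`: `l_∞([[l]]^a, [[l]]^x) ≤ 1` iff `x ≡ a (mod l)`. -/
theorem stmt6 (l : ℕ) (hl : 3 ≤ l) (a : ℕ) (ha : a ≤ l - 1) (x : ℕ) :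
    (∀ i : Fin l,
      |((((finRotate l) ^ a) i : ℕ) : ℤ) - ((((finRotate l) ^ x) i : ℕ) : ℤ)| ≤ 1)
    ↔ x % l = a % l := by
  obtain ⟨n, rfl⟩ : ∃ n, l = n + 1 := ⟨l - 1, by omega⟩
  simp only [powRot]
  constructor
  · intro h
    by_contra hne
    set b := a % (n+1) with hbdef
    set y := x % (n+1) with hydef
    have hb : b < n + 1 := Nat.mod_lt _ (by omega)
    have hy : y < n + 1 := Nat.mod_lt _ (by omega)
    have key : ∀ u : ℕ, u < n + 1 → (u + a) % (n+1) = (u + b) % (n+1) := by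
      intro u _; rw [hbdef, Nat.add_mod_mod]
    have key' : ∀ u : ℕ, u < n + 1 → (u + x) % (n+1) = (u + y) % (n+1) := by
      intro u _; rw [hydef, Nat.add_mod_mod]
    set p0 : ℕ := if b = 0 then 0 else (n + 1) - b with hp0def
    have hp0 : p0 < n + 1 := by rw [hp0def]; split <;> omega
    have hp1 : n - b < n + 1 := by omega
    have h0 := h ⟨p0, hp0⟩
    have h1 := h ⟨n - b, hp1⟩
    simp only [key p0 hp0, key' p0 hp0, key _ hp1, key' _ hp1] at h0 h1
    rw [modCases _ _ _ hp0 hb, modCases _ _ _ hp0 hy, abs_le] at h0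
    rw [modCases _ _ _ hp1 hb, modCases _ _ _ hp1 hy, abs_le] at h1
    rw [hp0def] at h0
    split_ifs at h0 h1 <;> omega
  · intro h i
    have : (i.val + a) % (n+1) = (i.val + x) % (n+1) := by
      rw [Nat.add_mod i.val a, ← h, ← Nat.add_mod]
    rw [this]
    simp
end

section
/- Let t be an odd natural number and let 0 ≤ t_1 < t_2 < t be integers such that t_1 ≢ t_2 (mod q) for every prime q dividing t. Then there exist permutations α, β of {1,…,t} such that α is a cycle of length t (its support is all of {1,…,t}), β is a product of disjoint 2-cycles (equivalently β∘β = id), and both l_∞(β, α^{t_1}) ≤ 1 and l_∞(β, α^{t_2}) ≤ 1 hold. -/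
/-!
Let `a` swap `2k ↔ 2k+1` and `b` swap `2k+1 ↔ 2k+2` on `{0, …, t-1}`. Both are involutions
moving every point by at most one, and `b * a` is the `t`-cycle
`0 → 2 → 4 → ⋯ → t-1 → t-2 → t-4 → ⋯ → 1 → 0`. Since `s = t₂ - t₁` is prime to `t`, some power
`α` of `b * a` is again a `t`-cycle with `α ^ s = b * a`. In the dihedral group generated by
`a` and `b`, the element `β = a * α ^ t₁` is an involution and equals `b * α ^ t₂`, so
`β` is within distance one of both `α ^ t₁` and `α ^ t₂`.
-/

open Equiv Equiv.Perm Function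

section Dihedral

variable {G : Type*} [Group G] {a b : G}

theorem mul_pow_mul_self_eq_one (ha : a * a = 1) (hb : b * b = 1) (k : ℕ) :
    a * (b * a) ^ k * (a * (b * a) ^ k) = 1 := by
  have ha' : a⁻¹ = a := inv_eq_of_mul_eq_one_right ha
  have hb' : b⁻¹ = b := inv_eq_of_mul_eq_one_right hb
  have hinv : a * (b * a) * a⁻¹ = (b * a)⁻¹ := by
    rw [mul_inv_rev, ha', hb', mul_assoc, mul_assoc, ha, mul_one]
  calc a * (b * a) ^ k * (a * (b * a) ^ k)
      = (a * (b * a) * a⁻¹) ^ k * (b * a) ^ k := by rw [conj_pow, ha']; group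
    _ = 1 := by rw [hinv, inv_pow, inv_mul_cancel]

theorem mul_pow_add_eq {x : G} {s : ℕ} (hb : b * b = 1) (hs : x ^ s = b * a) (n : ℕ) :
    b * x ^ (s + n) = a * x ^ n := by
  rw [pow_add, hs, ← mul_assoc, ← mul_assoc, hb, one_mul]

end Dihedral

namespace Equiv.Perm

variable {α : Type*} [Fintype α] [DecidableEq α] {c : Perm α}

theorem IsCycle.exists_pow_isCycle_pow_eq (hc : c.IsCycle) {s : ℕ}
    (hs : s.Coprime c.support.card) :
    ∃ m, (c ^ m).IsCycle ∧ (c ^ m).support = c.support ∧ (c ^ m) ^ s = c := by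
  obtain ⟨m, hm⟩ := exists_pow_eq_self_of_coprime (hc.orderOf ▸ hs)
  have hpow : (c ^ m) ^ s = c := by rw [← pow_mul, mul_comm, pow_mul, hm]
  have hsupp : (c ^ m).support = c.support := by
    refine le_antisymm (support_pow_le c m) ?_
    conv_lhs => rw [← hpow]
    exact support_pow_le (c ^ m) s
  exact ⟨m, (hpow ▸ hc).of_pow (by rw [hpow, hsupp]), hsupp, hpow⟩

end Equiv.Perm

theorem isCycle_and_support_eq_univ_of_semiconj_finRotate {n : ℕ} (hn : 2 ≤ n) {c : Perm (Fin n)}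
    {Q : Fin n → Fin n} (hQ : Injective Q) (h : ∀ x, Q (c x) = finRotate n (Q x)) :
    c.IsCycle ∧ c.support = Finset.univ := by
  set e := Equiv.ofBijective Q (Finite.injective_iff_bijective.mp hQ)
  have hc : c = e⁻¹ * finRotate n * e⁻¹⁻¹ := by
    ext x
    simp [e, ← h]
  refine ⟨hc ▸ (isCycle_finRotate_of_le hn).conj, ?_⟩
  rw [hc, support_conj, support_finRotate_of_le hn, Finset.map_univ_equiv]

theorem Nat.coprime_sub_of_forall_prime_mod_ne {t t₁ t₂ : ℕ} (h12 : t₁ ≤ t₂)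
    (hq : ∀ q : ℕ, q.Prime → q ∣ t → ¬ t₁ % q = t₂ % q) : (t₂ - t₁).Coprime t :=
  Nat.coprime_of_dvd fun q hq' hqs hqt => hq q hq' hqt ((Nat.modEq_iff_dvd' h12).mpr hqs)

section Zigzag

def finInvolution (t : ℕ) (f : ℕ → ℕ) (hf : ∀ x < t, f x < t ∧ f (f x) = x) :
    Perm (Fin t) where
  toFun i := ⟨f i, (hf i i.2).1⟩
  invFun i := ⟨f i, (hf i i.2).1⟩
  left_inv i := Fin.ext (hf i i.2).2
  right_inv i := Fin.ext (hf i i.2).2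

@[simp]
theorem finInvolution_apply_val (t : ℕ) (f : ℕ → ℕ) (hf : ∀ x < t, f x < t ∧ f (f x) = x)
    (i : Fin t) : (finInvolution t f hf i : ℕ) = f i :=
  rfl

theorem finInvolution_mul_self (t : ℕ) (f : ℕ → ℕ) (hf : ∀ x < t, f x < t ∧ f (f x) = x) :
    finInvolution t f hf * finInvolution t f hf = 1 :=
  Perm.ext fun i => Fin.ext (hf i i.2).2

def evenSwaps (t x : ℕ) : ℕ := if x % 2 = 0 then (if x + 1 = t then x else x + 1) else x - 1

def oddSwaps (x : ℕ) : ℕ := if x = 0 then 0 else if x % 2 = 1 then x + 1 else x - 1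

/-- The position of `x` on the cycle `0 → 2 → ⋯ → t-1 → t-2 → ⋯ → 1 → 0` of
`oddSwaps ∘ evenSwaps t`. -/
def zigzagPos (t x : ℕ) : ℕ := if x % 2 = 0 then x / 2 else t - (x + 1) / 2

variable {t : ℕ}

theorem evenSwaps_spec :
    ∀ x < t, evenSwaps t x < t ∧ evenSwaps t (evenSwaps t x) = x := by
  intro x hx; unfold evenSwaps; grind

theorem oddSwaps_spec (ht : t % 2 = 1) :
    ∀ x < t, oddSwaps x < t ∧ oddSwaps (oddSwaps x) = x := by
  intro x hx; unfold oddSwaps; grind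

theorem abs_evenSwaps_sub_le (x : ℕ) : |(evenSwaps t x : ℤ) - x| ≤ 1 := by
  rw [abs_le]; unfold evenSwaps; grind

theorem abs_oddSwaps_sub_le (x : ℕ) : |(oddSwaps x : ℤ) - x| ≤ 1 := by
  rw [abs_le]; unfold oddSwaps; grind

theorem zigzagPos_lt {x : ℕ} (hx : x < t) : zigzagPos t x < t := by
  unfold zigzagPos; grind

theorem zigzagPos_injOn : Set.InjOn (zigzagPos t) (Set.Iio t) := by
  intro x hx y hy h
  simp only [Set.mem_Iio, zigzagPos] at hx hy h
  grind

theorem zigzagPos_oddSwaps_evenSwaps (ht : t % 2 = 1) {x : ℕ} (hx : x < t) :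
    zigzagPos t (oddSwaps (evenSwaps t x)) =
      if zigzagPos t x = t - 1 then 0 else zigzagPos t x + 1 := by
  unfold zigzagPos oddSwaps evenSwaps; grind

def evenSwapsPerm (t : ℕ) : Perm (Fin t) := finInvolution t (evenSwaps t) evenSwaps_spec

def oddSwapsPerm (ht : t % 2 = 1) : Perm (Fin t) := finInvolution t oddSwaps (oddSwaps_spec ht)

theorem oddSwapsPerm_mul_evenSwapsPerm_isCycle_and_support_eq_univ (ht : t % 2 = 1) (ht1 : 1 < t) :
    (oddSwapsPerm ht * evenSwapsPerm t).IsCycle ∧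
      (oddSwapsPerm ht * evenSwapsPerm t).support = Finset.univ := by
  obtain ⟨n, rfl⟩ : ∃ n, t = n + 1 := ⟨t - 1, by omega⟩
  refine isCycle_and_support_eq_univ_of_semiconj_finRotate ht1
    (Q := fun x => ⟨zigzagPos (n + 1) x, zigzagPos_lt x.2⟩)
    (fun x y h => Fin.ext (zigzagPos_injOn x.2 y.2 (Fin.val_eq_of_eq h))) fun x => ?_
  ext
  rw [coe_finRotate]
  simp [Fin.ext_iff, oddSwapsPerm, evenSwapsPerm, zigzagPos_oddSwaps_evenSwaps ht x.2]

end Zigzag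

/-- Let `t` be odd, `0 ≤ t₁ < t₂ < t` with `t₁ ≢ t₂ (mod q)` for every prime `q ∣ t`.
Then there are permutations `α, β` of `{1,…,t}` (realized on `Fin t`) such that `α` is a
cycle of length `t` (support everything), `β` is a product of disjoint 2-cycles
(an involution), and `l_∞(β, α^{t₁}) ≤ 1` and `l_∞(β, α^{t₂}) ≤ 1`. -/
theorem stmt7 (t t₁ t₂ : ℕ) (ht : Odd t) (h12 : t₁ < t₂) (h2t : t₂ < t)
    (hq : ∀ q : ℕ, q.Prime → q ∣ t → ¬ t₁ % q = t₂ % q) :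
    ∃ α β : Equiv.Perm (Fin t),
      α.IsCycle ∧ α.support = Finset.univ ∧ β * β = 1 ∧
      (∀ i : Fin t, |((β i : ℕ) : ℤ) - (((α ^ t₁) i : ℕ) : ℤ)| ≤ 1) ∧
      (∀ i : Fin t, |((β i : ℕ) : ℤ) - (((α ^ t₂) i : ℕ) : ℤ)| ≤ 1) := by
  have ht2 : t % 2 = 1 := Nat.odd_iff.mp ht
  set a := evenSwapsPerm t
  set b := oddSwapsPerm ht2
  have ha : a * a = 1 := finInvolution_mul_self _ _ _
  have hb : b * b = 1 := finInvolution_mul_self _ _ _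
  obtain ⟨hcyc, hsupp⟩ := oddSwapsPerm_mul_evenSwapsPerm_isCycle_and_support_eq_univ ht2 (by omega)
  have hs : (t₂ - t₁).Coprime (b * a).support.card := by
    rw [hsupp, Finset.card_univ, Fintype.card_fin]
    exact Nat.coprime_sub_of_forall_prime_mod_ne h12.le hq
  obtain ⟨m, hαcyc, hαsupp, hαs⟩ := hcyc.exists_pow_isCycle_pow_eq hs
  refine ⟨(b * a) ^ m, a * ((b * a) ^ m) ^ t₁, hαcyc, hαsupp.trans hsupp, ?_,
    fun i => abs_evenSwaps_sub_le _, fun i => ?_⟩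
  · rw [← pow_mul]
    exact mul_pow_mul_self_eq_one ha hb _
  · rw [show t₂ = (t₂ - t₁) + t₁ by omega, ← mul_pow_add_eq hb hαs]
    exact abs_oddSwaps_sub_le _
end

section
/- In the setting of the ω-construction: for every i ∈ {0,…,t−1}, one has 1 ≤ |A(d_{i,1}) − A(d_{i,2})| ≤ 2; moreover, if |A(d_{i,1}) − A(d_{i,2})| = 1 then A(d_{i,2}) = 1 or A(d_{i,1}) = t. -/
lemma habs2 (a b : ℕ) (h : a + 2 = b ∨ b + 2 = a) : |(a : ℤ) - b| = 2 := by
  rcases h with h | h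
  · rw [show (a : ℤ) - b = -2 by omega]; norm_num
  · rw [show (a : ℤ) - b = 2 by omega]; norm_num

lemma habs1 (a b : ℕ) (h : a + 1 = b ∨ b + 1 = a) : |(a : ℤ) - b| = 1 := by
  rcases h with h | h
  · rw [show (a : ℤ) - b = -1 by omega]; norm_num
  · rw [show (a : ℤ) - b = 1 by omega]; norm_num

/-- ω-construction: `t ≥ 3` odd, `0 ≤ t₁ < t₂ < t` with `t₁ ≢ t₂ (mod q)` for all primes
`q ∣ t`, `ω = t₂ - t₁`, `ω_i = (i·ω) mod t`, `d_{i,k} = (i + t_k) mod t`, and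
`A : {0,…,t-1} → {1,…,t}` with `A(ω_i) = 2i+1` for `i ≤ (t-1)/2` and `A(ω_i) = 2(t-i)`
for `(t+1)/2 ≤ i ≤ t-1`.  Then for all `i < t` we have
`1 ≤ |A(d_{i,1}) − A(d_{i,2})| ≤ 2`, and if the difference is `1` then
`A(d_{i,2}) = 1` or `A(d_{i,1}) = t`. -/
theorem stmt10 (t t₁ t₂ : ℕ) (ht3 : 3 ≤ t) (ht : Odd t) (h12 : t₁ < t₂) (h2t : t₂ < t)
    (hq : ∀ q : ℕ, q.Prime → q ∣ t → ¬ t₁ % q = t₂ % q)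
    (A : ℕ → ℕ)
    (hA1 : ∀ i, i ≤ (t - 1) / 2 → A ((i * (t₂ - t₁)) % t) = 2 * i + 1)
    (hA2 : ∀ i, (t + 1) / 2 ≤ i → i ≤ t - 1 → A ((i * (t₂ - t₁)) % t) = 2 * (t - i)) :
    ∀ i < t,
      (1 ≤ |(A ((i + t₁) % t) : ℤ) - (A ((i + t₂) % t) : ℤ)| ∧
        |(A ((i + t₁) % t) : ℤ) - (A ((i + t₂) % t) : ℤ)| ≤ 2) ∧
      (|(A ((i + t₁) % t) : ℤ) - (A ((i + t₂) % t) : ℤ)| = 1 →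
        A ((i + t₂) % t) = 1 ∨ A ((i + t₁) % t) = t) := by
  haveI : NeZero t := ⟨by omega⟩
  set ω : ℕ := t₂ - t₁ with hωdef
  have hcop : Nat.Coprime ω t := by
    by_contra hc
    obtain ⟨q, hqp, hqd⟩ := Nat.exists_prime_and_dvd hc
    have hqt : q ∣ t := hqd.trans (Nat.gcd_dvd_right _ _)
    have hqω : q ∣ ω := hqd.trans (Nat.gcd_dvd_left _ _)
    exact hq q hqp hqt ((Nat.modEq_iff_dvd' h12.le).mpr hqω)
  obtain ⟨m, hm⟩ := ht
  have hm1 : 1 ≤ m := by omega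
  intro i hi
  set u : (ZMod t)ˣ := ZMod.unitOfCoprime ω hcop with hu
  set j : ℕ := ((((i + t₁ : ℕ)) : ZMod t) * ((u⁻¹ : (ZMod t)ˣ) : ZMod t)).val with hj
  have hjt : j < t := ZMod.val_lt _
  have hkey : ((j * ω : ℕ) : ZMod t) = ((i + t₁ : ℕ) : ZMod t) := by
    have hωu : ((ω : ℕ) : ZMod t) = (u : ZMod t) := (ZMod.coe_unitOfCoprime ω hcop).symm
    push_cast
    rw [hj, ZMod.natCast_val, ZMod.cast_id, hωu]
    push_cast
    exact Units.inv_mul_cancel_right _ u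
  have h1 : (j * ω) % t = (i + t₁) % t := (ZMod.natCast_eq_natCast_iff _ _ _).mp hkey
  have h2 : ((j + 1) * ω) % t = (i + t₂) % t := by
    have hr : (j + 1) * ω = j * ω + ω := by ring
    have ht2 : i + t₂ = (i + t₁) + ω := by omega
    rw [hr, ht2]
    exact Nat.ModEq.add_right ω h1
  rcases lt_trichotomy j m with hc | hc | hc
  · -- j < m : both values from hA1, difference 2
    have e1 : A ((i + t₁) % t) = 2 * j + 1 := by rw [← h1]; exact hA1 j (by omega)
    have e2 : A ((i + t₂) % t) = 2 * (j + 1) + 1 := by rw [← h2]; exact hA1 (j + 1) (by omega)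
    rw [e1, e2, habs2 _ _ (by omega)]
    omega
  · -- j = m : values t and t-1, difference 1, A(d₁) = t
    have e1 : A ((i + t₁) % t) = 2 * j + 1 := by rw [← h1]; exact hA1 j (by omega)
    have e2 : A ((i + t₂) % t) = 2 * (t - (j + 1)) := by
      rw [← h2]; exact hA2 (j + 1) (by omega) (by omega)
    rw [e1, e2, habs1 _ _ (by omega)]
    omega
  · by_cases hj2 : j = 2 * m
    · -- j = t - 1 : values 2 and 1, difference 1, A(d₂) = 1
      have e1 : A ((i + t₁) % t) = 2 * (t - j) := by
        rw [← h1]; exact hA2 j (by omega) (by omega)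
      have hz : (i + t₂) % t = 0 := by
        rw [← h2, show j + 1 = t by omega, Nat.mul_mod_right]
      have e2 : A ((i + t₂) % t) = 1 := by
        rw [hz]
        have := hA1 0 (Nat.zero_le _)
        simpa using this
      rw [e1, e2, habs1 _ _ (by omega)]
      omega
    · -- m < j < 2m : both values from hA2, difference 2
      have e1 : A ((i + t₁) % t) = 2 * (t - j) := by
        rw [← h1]; exact hA2 j (by omega) (by omega)
      have e2 : A ((i + t₂) % t) = 2 * (t - (j + 1)) := by
        rw [← h2]; exact hA2 (j + 1) (by omega) (by omega)
      rw [e1, e2, habs2 _ _ (by omega)]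
      omega
end

section
/- In the setting of the ω-construction, the map A : {0,…,t−1} → {1,…,t} given by A(ω_i) = 2i+1 for 0 ≤ i ≤ (t−1)/2 and A(ω_i) = 2(t−i) for (t+1)/2 ≤ i ≤ t−1 is a bijection, and the values along the ω-ordering have cyclically consecutive differences at most 2: for every j ∈ {0,…,t−1}, |A(ω_{(j+1) mod t}) − A(ω_j)| ≤ 2. -/
/-- ω-construction: the map `A` (with `A(ω_i) = 2i+1` for `i ≤ (t-1)/2` and
`A(ω_i) = 2(t-i)` for `(t+1)/2 ≤ i ≤ t-1`, where `ω_i = (i·ω) mod t`, `ω = t₂ - t₁`)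
is a bijection from `{0,…,t-1}` onto `{1,…,t}`, and cyclically consecutive values along
the ω-ordering differ by at most 2: for all `j < t`, `|A(ω_{(j+1) mod t}) − A(ω_j)| ≤ 2`. -/
theorem stmt11 (t t₁ t₂ : ℕ) (ht3 : 3 ≤ t) (ht : Odd t) (h12 : t₁ < t₂) (h2t : t₂ < t)
    (hq : ∀ q : ℕ, q.Prime → q ∣ t → ¬ t₁ % q = t₂ % q)
    (A : ℕ → ℕ)
    (hA1 : ∀ i, i ≤ (t - 1) / 2 → A ((i * (t₂ - t₁)) % t) = 2 * i + 1)
    (hA2 : ∀ i, (t + 1) / 2 ≤ i → i ≤ t - 1 → A ((i * (t₂ - t₁)) % t) = 2 * (t - i)) :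
    Set.BijOn A (Set.Iio t) (Set.Icc 1 t) ∧
    ∀ j < t,
      |(A ((((j + 1) % t) * (t₂ - t₁)) % t) : ℤ) - (A ((j * (t₂ - t₁)) % t) : ℤ)| ≤ 2 := by
  obtain ⟨m, hm⟩ := ht
  have hm1 : 1 ≤ m := by omega
  have ht0 : 0 < t := by omega
  have hmdiv : (t - 1) / 2 = m := by omega
  have hmdiv2 : (t + 1) / 2 = m + 1 := by omega
  set ω := t₂ - t₁ with hωdef
  -- coprimality
  have hcop : Nat.gcd ω t = 1 := by
    by_contra h
    obtain ⟨q, hqp, hqd⟩ := Nat.exists_prime_and_dvd h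
    have hqω : q ∣ ω := hqd.trans (Nat.gcd_dvd_left _ _)
    have hqt : q ∣ t := hqd.trans (Nat.gcd_dvd_right _ _)
    exact hq q hqp hqt ((Nat.modEq_iff_dvd' h12.le).mpr hqω)
  set f : ℕ → ℕ := fun i => (i * ω) % t with hfdef
  set B : ℕ → ℕ := fun i => if i ≤ m then 2 * i + 1 else 2 * (t - i) with hBdef
  have hAf : ∀ i ∈ Set.Iio t, A (f i) = B i := by
    intro i hi
    simp only [Set.mem_Iio] at hi
    by_cases hle : i ≤ m
    · simp only [hBdef, if_pos hle]
      exact hA1 i (by omega)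
    · simp only [hBdef, if_neg hle]
      exact hA2 i (by omega) (by omega)
  have hfmaps : Set.MapsTo f (Set.Iio t) (Set.Iio t) := by
    intro i _; exact Nat.mod_lt _ ht0
  have hfinj : Set.InjOn f (Set.Iio t) := by
    intro i hi j hj hij
    simp only [Set.mem_Iio] at hi hj
    have hcop' : Nat.gcd t ω = 1 := by rwa [Nat.gcd_comm] at hcop
    have : i ≡ j [MOD t] := by
      have h1 : i * ω ≡ j * ω [MOD t] := hij
      exact h1.cancel_right_of_coprime hcop'
    have := this
    unfold Nat.ModEq at this
    rwa [Nat.mod_eq_of_lt hi, Nat.mod_eq_of_lt hj] at this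
  have hfbij : Set.BijOn f (Set.Iio t) (Set.Iio t) :=
    ((Set.finite_Iio t).injOn_iff_bijOn_of_mapsTo hfmaps).mp hfinj
  have hBinj : ∀ i ∈ Set.Iio t, ∀ j ∈ Set.Iio t, B i = B j → i = j := by
    intro i hi j hj hij
    simp only [Set.mem_Iio] at hi hj
    simp only [hBdef] at hij
    split_ifs at hij <;> omega
  have hBmem : ∀ i ∈ Set.Iio t, B i ∈ Set.Icc 1 t := by
    intro i hi
    simp only [Set.mem_Iio] at hi
    simp only [hBdef, Set.mem_Icc]
    split_ifs <;> omega
  have hBsurj : ∀ v ∈ Set.Icc 1 t, ∃ i ∈ Set.Iio t, B i = v := by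
    intro v hv
    simp only [Set.mem_Icc] at hv
    rcases Nat.even_or_odd v with ⟨k, hk⟩ | ⟨k, hk⟩
    · refine ⟨t - k, by simp only [Set.mem_Iio]; omega, ?_⟩
      simp only [hBdef, if_neg (by omega : ¬ t - k ≤ m)]
      omega
    · refine ⟨k, by simp only [Set.mem_Iio]; omega, ?_⟩
      simp only [hBdef, if_pos (by omega : k ≤ m)]
      omega
  constructor
  · refine ⟨?_, ?_, ?_⟩
    · intro x hx
      obtain ⟨i, hi, hfi⟩ := hfbij.surjOn hx
      rw [← hfi, hAf i hi]
      exact hBmem i hi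
    · intro x hx y hy hxy
      obtain ⟨i, hi, hfi⟩ := hfbij.surjOn hx
      obtain ⟨j, hj, hfj⟩ := hfbij.surjOn hy
      rw [← hfi, ← hfj] at hxy ⊢
      rw [hAf i hi, hAf j hj] at hxy
      rw [hBinj i hi j hj hxy]
    · intro v hv
      obtain ⟨i, hi, hBi⟩ := hBsurj v hv
      exact ⟨f i, hfbij.mapsTo hi, by rw [hAf i hi, hBi]⟩
  · intro j hj
    have h1 : A ((j * ω) % t) = B j := hAf j hj
    by_cases hjt : j = t - 1
    · have h0 : (j + 1) % t = 0 := by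
        rw [hjt, Nat.sub_add_cancel (by omega : 1 ≤ t)]; exact Nat.mod_self t
      rw [h0]
      have h2 : A ((0 * ω) % t) = B 0 := hAf 0 (by simp only [Set.mem_Iio]; omega)
      rw [h1, h2]
      simp only [hBdef]
      rw [abs_sub_le_iff]
      constructor <;> (split_ifs <;> omega)
    · have h0 : (j + 1) % t = j + 1 := Nat.mod_eq_of_lt (by omega)
      rw [h0]
      have h2 : A (((j + 1) * ω) % t) = B (j + 1) :=
        hAf (j + 1) (by simp only [Set.mem_Iio]; omega)
      rw [h1, h2]
      simp only [hBdef]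
      rw [abs_sub_le_iff]
      constructor <;> (split_ifs <;> omega)
end

section
/- In the setting of the ω-construction with the auxiliary map A′: for every i ∈ {0,…,t−1}, A′(ω_{ψ_i}) = A(ω_{t−1−i}). -/
/-- ω-construction with the auxiliary map `A′`: with `ω = t₂ - t₁`, `ψ` the residue of
`ω⁻¹(t - t₁)` mod `t` (i.e. `ψ·ω ≡ t - t₁ (mod t)`), `ω_i = (i·ω) mod t`,
`ψ_i = (ψ + i) mod t`, `d_{i,k} = (i + t_k) mod t`, `A` as usual and `A′` defined by the
three cases (midpoint if the difference is 2, else the boundary values 1 or t), one has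
`A′(ω_{ψ_i}) = A(ω_{t-1-i})` for all `i < t`. -/
theorem stmt12 (t t₁ t₂ ψ : ℕ) (ht3 : 3 ≤ t) (ht : Odd t) (h12 : t₁ < t₂) (h2t : t₂ < t)
    (hq : ∀ q : ℕ, q.Prime → q ∣ t → ¬ t₁ % q = t₂ % q)
    (hψt : ψ < t) (hψ : (ψ * (t₂ - t₁)) % t = (t - t₁) % t)
    (A A' : ℕ → ℕ)
    (hA1 : ∀ i, i ≤ (t - 1) / 2 → A ((i * (t₂ - t₁)) % t) = 2 * i + 1)
    (hA2 : ∀ i, (t + 1) / 2 ≤ i → i ≤ t - 1 → A ((i * (t₂ - t₁)) % t) = 2 * (t - i))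
    (hA'1 : ∀ i < t, |(A ((i + t₁) % t) : ℤ) - (A ((i + t₂) % t) : ℤ)| = 2 →
      2 * A' i = A ((i + t₁) % t) + A ((i + t₂) % t))
    (hA'2 : ∀ i < t, |(A ((i + t₁) % t) : ℤ) - (A ((i + t₂) % t) : ℤ)| = 1 →
      A ((i + t₂) % t) = 1 → A' i = 1)
    (hA'3 : ∀ i < t, |(A ((i + t₁) % t) : ℤ) - (A ((i + t₂) % t) : ℤ)| = 1 →
      A ((i + t₁) % t) = t → A' i = t) :
    ∀ i < t, A' ((((ψ + i) % t) * (t₂ - t₁)) % t) = A (((t - 1 - i) * (t₂ - t₁)) % t) := by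

  intro i hi
  obtain ⟨m, hm⟩ := ht
  set ω := t₂ - t₁ with hωdef
  have hω : 0 < ω := by omega
  have ht0 : 0 < t := by omega
  set x := (((ψ + i) % t) * ω) % t with hxdef
  have hx : x < t := Nat.mod_lt _ ht0
  have h1 : (x + t₁) % t = (i * ω) % t := by
    have e1 : x ≡ (ψ + i) * ω [MOD t] :=
      (Nat.mod_modEq _ t).trans ((Nat.mod_modEq (ψ + i) t).mul_right ω)
    have e2 : ψ * ω ≡ t - t₁ [MOD t] := hψ
    calc x + t₁ ≡ (ψ + i) * ω + t₁ [MOD t] := e1.add_right t₁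
      _ = ψ * ω + (i * ω + t₁) := by ring
      _ ≡ (t - t₁) + (i * ω + t₁) [MOD t] := e2.add_right _
      _ = t + i * ω := by omega
      _ ≡ 0 + i * ω [MOD t] := Nat.ModEq.add_right _ (Nat.modEq_zero_iff_dvd.mpr dvd_rfl)
      _ = i * ω := by ring
  have h2 : (x + t₂) % t = ((i + 1) * ω) % t := by
    calc x + t₂ = (x + t₁) + ω := by omega
      _ ≡ i * ω + ω [MOD t] := Nat.ModEq.add_right ω h1
      _ = (i + 1) * ω := by ring
  have h0 : A ((0 * ω) % t) = 1 := by simpa using hA1 0 (Nat.zero_le _)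
  rcases Nat.lt_or_ge i m with hcase | hcase
  · -- i < m : difference-2 case, A' x = 2*(i+1)
    have hA1x : A ((x + t₁) % t) = 2 * i + 1 := by
      rw [h1]; exact hA1 i (by omega)
    have hA2x : A ((x + t₂) % t) = 2 * (i + 1) + 1 := by
      rw [h2]; exact hA1 (i + 1) (by omega)
    have hdiff : |(A ((x + t₁) % t) : ℤ) - (A ((x + t₂) % t) : ℤ)| = 2 := by
      rw [hA1x, hA2x, show ((2 * i + 1 : ℕ) : ℤ) - ((2 * (i + 1) + 1 : ℕ) : ℤ) = -2 by
        push_cast; ring]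
      norm_num
    have hA'x := hA'1 x hx hdiff
    rw [hA1x, hA2x] at hA'x
    have htgt : A (((t - 1 - i) * ω) % t) = 2 * (t - (t - 1 - i)) :=
      hA2 (t - 1 - i) (by omega) (by omega)
    rw [htgt]; omega
  · rcases Nat.eq_or_lt_of_le hcase with hcase' | hcase'
    · -- i = m : boundary case A' x = t
      have hA1x : A ((x + t₁) % t) = 2 * i + 1 := by
        rw [h1]; exact hA1 i (by omega)
      have hA2x : A ((x + t₂) % t) = 2 * (t - (i + 1)) := by
        rw [h2]; exact hA2 (i + 1) (by omega) (by omega)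
      have he2 : 2 * (t - (i + 1)) = 2 * m := by omega
      have hdiff : |(A ((x + t₁) % t) : ℤ) - (A ((x + t₂) % t) : ℤ)| = 1 := by
        rw [hA1x, hA2x, he2, show ((2 * i + 1 : ℕ) : ℤ) - ((2 * m : ℕ) : ℤ) = 1 by
          push_cast; omega]
        norm_num
      have hA'x : A' x = t := hA'3 x hx hdiff (by rw [hA1x]; omega)
      have htgt : A (((t - 1 - i) * ω) % t) = 2 * (t - 1 - i) + 1 :=
        hA1 (t - 1 - i) (by omega)
      rw [htgt]; omega
    · rcases Nat.lt_or_ge i (t - 1) with hend | hend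
      · -- m < i < t-1 : difference-2 case
        have hA1x : A ((x + t₁) % t) = 2 * (t - i) := by
          rw [h1]; exact hA2 i (by omega) (by omega)
        have hA2x : A ((x + t₂) % t) = 2 * (t - (i + 1)) := by
          rw [h2]; exact hA2 (i + 1) (by omega) (by omega)
        have hdiff : |(A ((x + t₁) % t) : ℤ) - (A ((x + t₂) % t) : ℤ)| = 2 := by
          rw [hA1x, hA2x, show (2 * (t - i) : ℕ) = 2 * (t - (i + 1)) + 2 by omega,
            show ((2 * (t - (i + 1)) + 2 : ℕ) : ℤ) - ((2 * (t - (i + 1)) : ℕ) : ℤ) = 2 by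
              push_cast; ring]
          norm_num
        have hA'x := hA'1 x hx hdiff
        rw [hA1x, hA2x] at hA'x
        have htgt : A (((t - 1 - i) * ω) % t) = 2 * (t - 1 - i) + 1 :=
          hA1 (t - 1 - i) (by omega)
        rw [htgt]; omega
      · -- i = t - 1 : boundary case A' x = 1
        have hie : i = t - 1 := by omega
        have hA1x : A ((x + t₁) % t) = 2 * (t - i) := by
          rw [h1]; exact hA2 i (by omega) (by omega)
        have hA2x : A ((x + t₂) % t) = 1 := by
          rw [h2, show i + 1 = t by omega, Nat.mul_mod_right]
          simpa using h0
        have hdiff : |(A ((x + t₁) % t) : ℤ) - (A ((x + t₂) % t) : ℤ)| = 1 := by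
          rw [hA1x, hA2x, show (2 * (t - i) : ℕ) = 2 by omega]
          norm_num
        have hA'x : A' x = 1 := hA'2 x hx hdiff hA2x
        rw [show t - 1 - i = 0 by omega, h0, hA'x]
end

section
/- In the setting of the ω-construction with the auxiliary map A′: for all i, j ∈ {0,…,t−1}, A′(i) = A(j) if and only if A′(j) = A(i). -/
/-- ω-construction with the auxiliary map `A′`: with `ω = t₂ - t₁`, `ψ` the residue of
`ω⁻¹(t - t₁)` mod `t`, `ω_i = (i·ω) mod t`, `d_{i,k} = (i + t_k) mod t`, `A` as usual and
`A′` defined by the three cases, for all `i, j ∈ {0,…,t-1}` one has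
`A′(i) = A(j) ↔ A′(j) = A(i)`. -/
theorem stmt13 (t t₁ t₂ ψ : ℕ) (ht3 : 3 ≤ t) (ht : Odd t) (h12 : t₁ < t₂) (h2t : t₂ < t)
    (hq : ∀ q : ℕ, q.Prime → q ∣ t → ¬ t₁ % q = t₂ % q)
    (hψt : ψ < t) (hψ : (ψ * (t₂ - t₁)) % t = (t - t₁) % t)
    (A A' : ℕ → ℕ)
    (hA1 : ∀ i, i ≤ (t - 1) / 2 → A ((i * (t₂ - t₁)) % t) = 2 * i + 1)
    (hA2 : ∀ i, (t + 1) / 2 ≤ i → i ≤ t - 1 → A ((i * (t₂ - t₁)) % t) = 2 * (t - i))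
    (hA'1 : ∀ i < t, |(A ((i + t₁) % t) : ℤ) - (A ((i + t₂) % t) : ℤ)| = 2 →
      2 * A' i = A ((i + t₁) % t) + A ((i + t₂) % t))
    (hA'2 : ∀ i < t, |(A ((i + t₁) % t) : ℤ) - (A ((i + t₂) % t) : ℤ)| = 1 →
      A ((i + t₂) % t) = 1 → A' i = 1)
    (hA'3 : ∀ i < t, |(A ((i + t₁) % t) : ℤ) - (A ((i + t₂) % t) : ℤ)| = 1 →
      A ((i + t₁) % t) = t → A' i = t) :
    ∀ i < t, ∀ j < t, (A' i = A j ↔ A' j = A i) := by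
  obtain ⟨m, hm⟩ := ht
  have ht0 : 0 < t := by omega
  set ω := t₂ - t₁ with hω
  have hω0 : 0 < ω := by omega
  -- ω is coprime to t
  have hgcd : Nat.Coprime ω t := by
    by_contra h
    obtain ⟨q, hqp, hq1, hq2⟩ := Nat.Prime.not_coprime_iff_dvd.mp h
    exact hq q hqp hq2 ((Nat.modEq_iff_dvd' h12.le).mpr hq1)
  haveI : NeZero t := ⟨by omega⟩
  -- surjectivity of a ↦ a*ω mod t
  have hsurj : ∀ x : ℕ, ∃ a, a < t ∧ (a * ω) % t = x % t := by
    intro x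
    set u : (ZMod t)ˣ := ZMod.unitOfCoprime ω hgcd with hu
    refine ⟨(((u⁻¹ : (ZMod t)ˣ) : ZMod t) * (x : ZMod t)).val, ZMod.val_lt _, ?_⟩
    have key : (((((u⁻¹ : (ZMod t)ˣ) : ZMod t) * (x : ZMod t)).val * ω : ℕ) : ZMod t)
        = (x : ZMod t) := by
      push_cast
      rw [ZMod.natCast_val, ZMod.cast_id]
      have hωu : (ω : ZMod t) = (u : ZMod t) := (ZMod.coe_unitOfCoprime ω hgcd).symm
      rw [hωu]
      calc ((u⁻¹ : (ZMod t)ˣ) : ZMod t) * (x : ZMod t) * (u : ZMod t)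
          = (x : ZMod t) * (((u⁻¹ : (ZMod t)ˣ) : ZMod t) * (u : ZMod t)) := by ring
        _ = (x : ZMod t) := by rw [Units.inv_mul, mul_one]
    exact (ZMod.natCast_eq_natCast_iff _ _ _).mp key
  -- abs helper
  have habs : ∀ (u v : ℕ) (d : ℤ), ((u:ℤ) = v + d ∨ (v:ℤ) = u + d) → 0 ≤ d →
      |(u:ℤ) - (v:ℤ)| = d := by
    intro u v d h hd
    rcases h with h | h
    · have e : (u:ℤ) - v = d := by rw [h]; ring
      rw [e, abs_of_nonneg hd]
    · have e : (u:ℤ) - v = -d := by rw [h]; ring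
      rw [e, abs_neg, abs_of_nonneg hd]
  -- injectivity of A on [0,t)
  have hAinj : ∀ x, x < t → ∀ y, y < t → A x = A y → x = y := by
    intro x hx y hy hxy
    obtain ⟨a, ha, haeq⟩ := hsurj x
    obtain ⟨b, hb, hbeq⟩ := hsurj y
    rw [Nat.mod_eq_of_lt hx] at haeq
    rw [Nat.mod_eq_of_lt hy] at hbeq
    rw [← haeq, ← hbeq] at hxy ⊢
    have hab : a = b := by
      rcases le_or_gt a m with h1 | h1 <;> rcases le_or_gt b m with h2 | h2
      · rw [hA1 a (by omega), hA1 b (by omega)] at hxy; omega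
      · rw [hA1 a (by omega), hA2 b (by omega) (by omega)] at hxy; omega
      · rw [hA2 a (by omega) (by omega), hA1 b (by omega)] at hxy; omega
      · rw [hA2 a (by omega) (by omega), hA2 b (by omega) (by omega)] at hxy; omega
    rw [hab]
  -- nonvanishing of k*ω mod t for 0 < k < t
  have hx0 : ∀ k, 0 < k → k < t → (k * ω) % t ≠ 0 := by
    intro k hk1 hk2 h
    have hd : t ∣ k * ω := Nat.dvd_of_mod_eq_zero h
    have hdk : t ∣ k := (Nat.Coprime.dvd_of_dvd_mul_right hgcd.symm hd)
    have := Nat.le_of_dvd hk1 hdk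
    omega
  -- negation formula
  have hneg : ∀ k, 0 < k → k < t → (t - (k * ω) % t) % t = ((t - k) * ω) % t := by
    intro k hk1 hk2
    set x := (k * ω) % t with hxdef
    have hxlt : x < t := Nat.mod_lt _ ht0
    have hxne : x ≠ 0 := hx0 k hk1 hk2
    set y := ((t - k) * ω) % t with hydef
    have hylt : y < t := Nat.mod_lt _ ht0
    have hsum : (y + x) % t = 0 := by
      have he : (t - k) * ω + k * ω = t * ω := by
        have h1 : (t - k) + k = t := by omega
        calc (t - k) * ω + k * ω = ((t - k) + k) * ω := by ring
          _ = t * ω := by rw [h1]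
      calc (y + x) % t = (((t - k) * ω) % t + (k * ω) % t) % t := rfl
        _ = ((t - k) * ω + k * ω) % t := (Nat.add_mod _ _ _).symm
        _ = (t * ω) % t := by rw [he]
        _ = 0 := Nat.mul_mod_right t ω
    have hyx : y + x = t := by
      obtain ⟨c, hc⟩ := Nat.dvd_of_mod_eq_zero hsum
      have hc2 : c < 2 := by
        by_contra hcc
        push_neg at hcc
        have : t * 2 ≤ t * c := Nat.mul_le_mul_left t hcc
        omega
      interval_cases c <;> omega
    have : (t - x) % t = t - x := Nat.mod_eq_of_lt (by omega)
    omega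
  -- the key formula : A' i = A (-(i+t₂) mod t)
  have hkey : ∀ i, i < t → A' i = A ((t - (i + t₂) % t) % t) := by
    intro i hi
    obtain ⟨a, ha, haeq⟩ := hsurj (i + t₁)
    have hd1 : (i + t₁) % t = (a * ω) % t := haeq.symm
    have hd2 : (i + t₂) % t = ((a + 1) * ω) % t := by
      have h0 : a * ω ≡ i + t₁ [MOD t] := haeq
      have h1 : i + t₂ ≡ (a + 1) * ω [MOD t] := by
        calc i + t₂ = (i + t₁) + ω := by omega
          _ ≡ a * ω + ω [MOD t] := Nat.ModEq.add_right ω h0.symm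
          _ = (a + 1) * ω := by ring
      exact h1
    rcases Nat.lt_or_ge a m with hcase | hge
    · -- case a < m : both odd-range
      have hAd1 : A ((i + t₁) % t) = 2 * a + 1 := by rw [hd1]; exact hA1 a (by omega)
      have hAd2 : A ((i + t₂) % t) = 2 * (a + 1) + 1 := by rw [hd2]; exact hA1 (a + 1) (by omega)
      have habs' : |(A ((i + t₁) % t) : ℤ) - (A ((i + t₂) % t) : ℤ)| = 2 := by
        rw [hAd1, hAd2]
        exact habs _ _ 2 (Or.inr (by push_cast; ring)) (by norm_num)
      have hA'i := hA'1 i hi habs'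
      rw [hAd1, hAd2] at hA'i
      rw [hd2, hneg (a + 1) (by omega) (by omega)]
      rw [hA2 (t - (a + 1)) (by omega) (by omega)]
      omega
    rcases Nat.lt_or_ge m a with hcase2 | _
    · rcases Nat.lt_or_ge a (t - 1) with hcase3 | hcase4
      · -- case m < a < t-1 : both even-range
        have hAd1 : A ((i + t₁) % t) = 2 * (t - a) := by
          rw [hd1]; exact hA2 a (by omega) (by omega)
        have hAd2 : A ((i + t₂) % t) = 2 * (t - (a + 1)) := by
          rw [hd2]; exact hA2 (a + 1) (by omega) (by omega)
        have habs' : |(A ((i + t₁) % t) : ℤ) - (A ((i + t₂) % t) : ℤ)| = 2 := by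
          rw [hAd1, hAd2]
          refine habs _ _ 2 (Or.inl ?_) (by norm_num)
          have e1 : 2 * (t - a) = 2 * (t - (a + 1)) + 2 := by omega
          exact_mod_cast congrArg (Nat.cast : ℕ → ℤ) e1
        have hA'i := hA'1 i hi habs'
        rw [hAd1, hAd2] at hA'i
        rw [hd2, hneg (a + 1) (by omega) (by omega)]
        rw [hA1 (t - (a + 1)) (by omega)]
        omega
      · -- case a = t - 1
        have ha' : a = t - 1 := by omega
        have hAd1 : A ((i + t₁) % t) = 2 * (t - a) := by
          rw [hd1]; exact hA2 a (by omega) (by omega)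
        have hz : ((a + 1) * ω) % t = 0 := by
          rw [show a + 1 = t from by omega]; exact Nat.mul_mod_right t ω
        have hA0 : A 0 = 1 := by
          have h0 := hA1 0 (by omega)
          simpa using h0
        have hAd2 : A ((i + t₂) % t) = 1 := by rw [hd2, hz]; exact hA0
        have habs' : |(A ((i + t₁) % t) : ℤ) - (A ((i + t₂) % t) : ℤ)| = 1 := by
          rw [hAd1, hAd2]
          refine habs _ _ 1 (Or.inl ?_) (by norm_num)
          have e1 : 2 * (t - a) = 1 + 1 := by omega
          exact_mod_cast congrArg (Nat.cast : ℕ → ℤ) e1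
        have hA'i := hA'2 i hi habs' hAd2
        rw [hd2, hz, Nat.sub_zero, Nat.mod_self, hA0, hA'i]
    · -- case a = m
      have ha' : a = m := by omega
      have hAd1 : A ((i + t₁) % t) = 2 * a + 1 := by rw [hd1]; exact hA1 a (by omega)
      have hAd2 : A ((i + t₂) % t) = 2 * (t - (a + 1)) := by
        rw [hd2]; exact hA2 (a + 1) (by omega) (by omega)
      have habs' : |(A ((i + t₁) % t) : ℤ) - (A ((i + t₂) % t) : ℤ)| = 1 := by
        rw [hAd1, hAd2]
        refine habs _ _ 1 (Or.inl ?_) (by norm_num)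
        have e1 : 2 * a + 1 = 2 * (t - (a + 1)) + 1 := by omega
        exact_mod_cast congrArg (Nat.cast : ℕ → ℤ) e1
      have hAt : A ((i + t₁) % t) = t := by rw [hAd1]; omega
      have hA'i := hA'3 i hi habs' hAt
      rw [hd2, hneg (a + 1) (by omega) (by omega)]
      rw [hA1 (t - (a + 1)) (by omega)]
      omega
  -- the involution property of x ↦ (t - (x + t₂) % t) % t
  have hinv : ∀ x : ℕ, ((t - x % t) % t + x) % t = 0 := by
    intro x
    have hxt : x % t < t := Nat.mod_lt _ ht0
    have e : ((t - x % t) % t + x) % t = ((t - x % t) % t + x % t) % t :=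
      Nat.ModEq.add_left _ ((Nat.mod_modEq x t).symm)
    rw [e]
    rcases Nat.eq_zero_or_pos (x % t) with h | h
    · rw [h, Nat.sub_zero, Nat.mod_self, Nat.zero_add, Nat.zero_mod]
    · have h2 : (t - x % t) % t = t - x % t := Nat.mod_eq_of_lt (by omega)
      rw [h2, show t - x % t + x % t = t from by omega, Nat.mod_self]
  have huniq : ∀ u v c : ℕ, u < t → v < t → (u + c) % t = 0 → (v + c) % t = 0 → u = v := by
    intro u v c hu hv h1 h2
    have h3 : u ≡ v [MOD t] := Nat.ModEq.add_right_cancel' c (h1.trans h2.symm)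
    have h4 : u % t = v % t := h3
    rw [Nat.mod_eq_of_lt hu, Nat.mod_eq_of_lt hv] at h4
    exact h4
  have hsymdir : ∀ u v, u < t → v < t →
      (t - (u + t₂) % t) % t = v → (t - (v + t₂) % t) % t = u := by
    intro u v hu hv h
    have h1 : (v + (u + t₂)) % t = 0 := by rw [← h]; exact hinv (u + t₂)
    have h2 : ((t - (v + t₂) % t) % t + (v + t₂)) % t = 0 := hinv (v + t₂)
    have h1' : (u + (v + t₂)) % t = 0 := by
      rw [show u + (v + t₂) = v + (u + t₂) from by ring]; exact h1
    exact huniq _ _ _ (Nat.mod_lt _ ht0) hu h2 h1'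
  have main : ∀ u, u < t → ∀ v, v < t → A' u = A v → A' v = A u := by
    intro u hu v hv h
    rw [hkey u hu] at h
    have hv' : (t - (u + t₂) % t) % t = v := hAinj _ (Nat.mod_lt _ ht0) v hv h
    have hu' := hsymdir u v hu hv hv'
    rw [hkey v hv, hu']
  intro i hi j hj
  exact ⟨main i hi j hj, main j hj i hi⟩
end

section
/- Let τ ∈ S_n and let k be a natural number. Then there exists a natural number z with z ≢ 0 (mod ord(τ)) and w_H(τ^z) ≤ k if and only if there exists a prime p dividing ord(τ) with w_H(τ^{ord(τ)/p}) ≤ k. -/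
/-- For `τ ∈ S_n` and `k : ℕ`: there is a natural `z` with `z ≢ 0 (mod ord(τ))` and
Hamming weight `w_H(τ^z) ≤ k` iff there is a prime `p ∣ ord(τ)` with
`w_H(τ^{ord(τ)/p}) ≤ k`. -/
theorem stmt15 (n : ℕ) (τ : Equiv.Perm (Fin n)) (k : ℕ) :
    (∃ z : ℕ, ¬ z % orderOf τ = 0 ∧ (τ ^ z).support.card ≤ k) ↔
      (∃ p : ℕ, p.Prime ∧ p ∣ orderOf τ ∧ (τ ^ (orderOf τ / p)).support.card ≤ k) := by
  have hord : 0 < orderOf τ := orderOf_pos τ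
  constructor
  · rintro ⟨z, hz, hk⟩
    set N := orderOf τ with hN
    have hndvd : ¬ N ∣ z := by intro h; apply hz; omega
    set d := Nat.gcd z N with hd
    have hdN : d ∣ N := Nat.gcd_dvd_right z N
    have hdz : d ∣ z := Nat.gcd_dvd_left z N
    have hd0 : 0 < d := Nat.gcd_pos_of_pos_right z hord
    have hdne : N / d ≠ 1 := by
      intro h
      have : d = N := by
        have := Nat.div_mul_cancel hdN
        rw [h, one_mul] at this
        omega
      exact hndvd (this ▸ hdz)
    obtain ⟨p, hp, hpdvd⟩ := Nat.exists_prime_and_dvd hdne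
    have hpN : p ∣ N := hpdvd.trans (Nat.div_dvd_of_dvd hdN)
    -- d ∣ N / p
    have hdNp : d ∣ N / p := by
      have hdpN : d * p ∣ N := by
        obtain ⟨c, hc⟩ := hpdvd
        exact ⟨c, by rw [mul_assoc, ← hc, Nat.mul_div_cancel' hdN]⟩
      exact (Nat.dvd_div_iff_mul_dvd hpN).mpr (mul_comm d p ▸ hdpN)
    -- support (τ^d) ≤ support (τ^z)
    have key : (τ ^ d).support ≤ (τ ^ z).support := by
      have h1 : τ ^ (d : ℤ) = (τ ^ z) ^ (Nat.gcdA z N) := by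
        have hbezout : (d : ℤ) = z * Nat.gcdA z N + N * Nat.gcdB z N := Nat.gcd_eq_gcd_ab z N
        rw [hbezout, zpow_add, zpow_mul, zpow_mul, zpow_natCast, zpow_natCast,
          pow_orderOf_eq_one, one_zpow, mul_one]
      calc (τ ^ d).support = (τ ^ (d : ℤ)).support := by rw [zpow_natCast]
        _ = ((τ ^ z) ^ (Nat.gcdA z N)).support := by rw [h1]
        _ ≤ (τ ^ z).support := Equiv.Perm.support_zpow_le _ _
    refine ⟨p, hp, hpN, le_trans (le_trans ?_ (Finset.card_le_card key)) hk⟩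
    obtain ⟨c, hc⟩ := hdNp
    have : τ ^ (N / p) = (τ ^ d) ^ c := by rw [← pow_mul, ← hc]
    rw [this]
    exact Finset.card_le_card (Equiv.Perm.support_pow_le _ _)
  · rintro ⟨p, hp, hpd, hk⟩
    refine ⟨orderOf τ / p, ?_, hk⟩
    have h1 : 0 < orderOf τ / p := Nat.div_pos (Nat.le_of_dvd hord hpd) hp.pos
    have h2 : orderOf τ / p < orderOf τ := Nat.div_lt_self hord hp.one_lt
    rw [Nat.mod_eq_of_lt h2]
    omega
end

section
/- Let p_1 < p_2 < p_3 be primes with p_1³ > 6·p_3², and set q = p_1·p_2·p_3. Let s_1,…,s_6 ∈ {0,…,q−1} be the unique residues determined by: s_1 ≡ 1, 0, 0; s_2 ≡ 0, 1, 0; s_3 ≡ 0, 0, 1; s_4 ≡ 1, 2, 3; s_5 ≡ 3, 1, 2; s_6 ≡ 2, 3, 1 (mod p_1, p_2, p_3 respectively). Then for every integer z: the sum ∑_{d=1}^{6} gcd(q, s_d − z) equals q + 2 + p_1 + p_2 + p_3 if there exists a ∈ {1,2,3} with z ≡ s_a (mod q), and ∑_{d=1}^{6} gcd(q, s_d − z)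 < q + 2 + p_1 + p_2 + p_3 otherwise. -/
set_option maxHeartbeats 4000000

private lemma gcdMulCop {a b : ℕ} (h : Nat.Coprime a b) (n : ℕ) :
    Nat.gcd (a * b) n = Nat.gcd a n * Nat.gcd b n := by
  apply Nat.dvd_antisymm
  · have h2 := gcd_mul_dvd_mul_gcd n a b
    simp only [gcd_eq_nat_gcd] at h2
    rw [Nat.gcd_comm (a*b) n, Nat.gcd_comm a n, Nat.gcd_comm b n]
    exact h2
  · refine Nat.dvd_gcd (Nat.mul_dvd_mul (Nat.gcd_dvd_left _ _) (Nat.gcd_dvd_left _ _)) ?_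
    exact Nat.Coprime.mul_dvd_of_dvd_of_dvd
      ((h.coprime_dvd_left (Nat.gcd_dvd_left a n)).coprime_dvd_right (Nat.gcd_dvd_left b n))
      (Nat.gcd_dvd_right a n) (Nat.gcd_dvd_right b n)

private lemma gcdPrime (p n : ℕ) (hp : p.Prime) :
    Nat.gcd p n = if p ∣ n then p else 1 := by
  split
  · exact Nat.gcd_eq_left ‹_›
  · exact (Nat.Prime.coprime_iff_not_dvd hp).mpr ‹_›

private lemma gcd3 {p₁ p₂ p₃ : ℕ} (hp₁ : p₁.Prime) (hp₂ : p₂.Prime) (hp₃ : p₃.Prime)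
    (h12 : p₁ ≠ p₂) (h13 : p₁ ≠ p₃) (h23 : p₂ ≠ p₃) (m : ℤ) :
    Int.gcd ((p₁ * p₂ * p₃ : ℕ) : ℤ) m =
      (if (p₁:ℤ) ∣ m then p₁ else 1) * (if (p₂:ℤ) ∣ m then p₂ else 1) *
      (if (p₃:ℤ) ∣ m then p₃ else 1) := by
  have c12 := (Nat.coprime_primes hp₁ hp₂).mpr h12
  have c13 := (Nat.coprime_primes hp₁ hp₃).mpr h13
  have c23 := (Nat.coprime_primes hp₂ hp₃).mpr h23
  have h0 : Int.gcd ((p₁*p₂*p₃:ℕ):ℤ) m = Nat.gcd (p₁*p₂*p₃) m.natAbs := by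
    simp [Int.gcd, Int.natAbs_mul]
  rw [h0, gcdMulCop (Nat.Coprime.mul c13 c23 : Nat.Coprime (p₁*p₂) p₃),
    gcdMulCop c12, gcdPrime _ _ hp₁, gcdPrime _ _ hp₂, gcdPrime _ _ hp₃]
  simp only [Int.natCast_dvd]

private lemma rowIff {p s t : ℕ} (h : s % p = t % p) (z : ℤ) :
    ((p:ℤ) ∣ (s:ℤ) - z) ↔ ((p:ℤ) ∣ z - (t:ℤ)) := by
  have h1 : (p:ℤ) ∣ (s:ℤ) - (t:ℤ) := by
    have h2 : (s : ℤ) % p = (t : ℤ) % p := by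
      rw [← Int.natCast_mod, ← Int.natCast_mod, h]
    exact Int.ModEq.dvd (Int.ModEq.symm h2)
  constructor
  · intro hd
    have h2 := dvd_sub hd h1
    rw [show (s:ℤ) - z - ((s:ℤ) - t) = -(z - t) by ring] at h2
    exact dvd_neg.mp h2
  · intro hd
    have h2 := dvd_sub h1 hd
    rwa [show (s:ℤ) - t - (z - t) = (s:ℤ) - z by ring] at h2

private lemma notBoth {p : ℕ} (hp : 7 ≤ p) {z v w : ℤ} (h1 : v < w) (h2 : w < v + 7)
    (hv : (p:ℤ) ∣ z - v) (hw : (p:ℤ) ∣ z - w) : False := by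
  have hd : (p:ℤ) ∣ w - v := by
    have h3 := dvd_sub hv hw
    rwa [show z - v - (z - w) = w - v by ring] at h3
  have := Int.le_of_dvd (by omega) hd
  omega

private lemma fiveway (P0 P1 P2 P3 : Prop)
    (h01 : ¬(P0 ∧ P1)) (h02 : ¬(P0 ∧ P2)) (h03 : ¬(P0 ∧ P3))
    (h12 : ¬(P1 ∧ P2)) (h13 : ¬(P1 ∧ P3)) (h23 : ¬(P2 ∧ P3)) :
    (P0 ∧ ¬P1 ∧ ¬P2 ∧ ¬P3) ∨ (¬P0 ∧ P1 ∧ ¬P2 ∧ ¬P3) ∨ (¬P0 ∧ ¬P1 ∧ P2 ∧ ¬P3) ∨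
    (¬P0 ∧ ¬P1 ∧ ¬P2 ∧ P3) ∨ (¬P0 ∧ ¬P1 ∧ ¬P2 ∧ ¬P3) := by
  rcases em P0 with h0 | h0
  · exact Or.inl ⟨h0, fun h => h01 ⟨h0, h⟩, fun h => h02 ⟨h0, h⟩, fun h => h03 ⟨h0, h⟩⟩
  rcases em P1 with h1 | h1
  · exact Or.inr (Or.inl ⟨h0, h1, fun h => h12 ⟨h1, h⟩, fun h => h13 ⟨h1, h⟩⟩)
  rcases em P2 with h2 | h2
  · exact Or.inr (Or.inr (Or.inl ⟨h0, h1, h2, fun h => h23 ⟨h2, h⟩⟩))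
  rcases em P3 with h3 | h3
  · exact Or.inr (Or.inr (Or.inr (Or.inl ⟨h0, h1, h2, h3⟩)))
  · exact Or.inr (Or.inr (Or.inr (Or.inr ⟨h0, h1, h2, h3⟩)))

private lemma colCases {p : ℕ} (hp : 7 ≤ p) (z : ℤ) :
    ((p:ℤ) ∣ z ∧ ¬(p:ℤ) ∣ z-1 ∧ ¬(p:ℤ) ∣ z-2 ∧ ¬(p:ℤ) ∣ z-3) ∨
    (¬(p:ℤ) ∣ z ∧ (p:ℤ) ∣ z-1 ∧ ¬(p:ℤ) ∣ z-2 ∧ ¬(p:ℤ) ∣ z-3) ∨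
    (¬(p:ℤ) ∣ z ∧ ¬(p:ℤ) ∣ z-1 ∧ (p:ℤ) ∣ z-2 ∧ ¬(p:ℤ) ∣ z-3) ∨
    (¬(p:ℤ) ∣ z ∧ ¬(p:ℤ) ∣ z-1 ∧ ¬(p:ℤ) ∣ z-2 ∧ (p:ℤ) ∣ z-3) ∨
    (¬(p:ℤ) ∣ z ∧ ¬(p:ℤ) ∣ z-1 ∧ ¬(p:ℤ) ∣ z-2 ∧ ¬(p:ℤ) ∣ z-3) := by
  have ex : ∀ v w : ℤ, v < w → w < v + 7 → ¬((p:ℤ) ∣ z - v ∧ (p:ℤ) ∣ z - w) :=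
    fun v w h1 h2 h3 => notBoth hp h1 h2 h3.1 h3.2
  apply fiveway
  · exact fun h => ex 0 1 (by norm_num) (by norm_num) ⟨by simpa using h.1, h.2⟩
  · exact fun h => ex 0 2 (by norm_num) (by norm_num) ⟨by simpa using h.1, h.2⟩
  · exact fun h => ex 0 3 (by norm_num) (by norm_num) ⟨by simpa using h.1, h.2⟩
  · exact fun h => ex 1 2 (by norm_num) (by norm_num) h
  · exact fun h => ex 1 3 (by norm_num) (by norm_num) h
  · exact fun h => ex 2 3 (by norm_num) (by norm_num) h

/-- Let `p₁ < p₂ < p₃` be primes with `p₁³ > 6·p₃²`, `q = p₁·p₂·p₃`, and let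
`s₁,…,s₆ ∈ {0,…,q-1}` be the residues determined by the table
`s₁ ≡ 1,0,0`, `s₂ ≡ 0,1,0`, `s₃ ≡ 0,0,1`, `s₄ ≡ 1,2,3`, `s₅ ≡ 3,1,2`, `s₆ ≡ 2,3,1`
`(mod p₁, p₂, p₃` respectively`)`.  Then for every integer `z`, the sum
`∑_{d=1}^{6} gcd(q, s_d − z)` equals `q + 2 + p₁ + p₂ + p₃` if `z ≡ s_a (mod q)` for
some `a ∈ {1,2,3}`, and is strictly smaller otherwise. -/
theorem stmt16 (p₁ p₂ p₃ q : ℕ) (hp₁ : p₁.Prime) (hp₂ : p₂.Prime) (hp₃ : p₃.Prime)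
    (h12 : p₁ < p₂) (h23 : p₂ < p₃) (hbig : 6 * p₃ ^ 2 < p₁ ^ 3)
    (hq : q = p₁ * p₂ * p₃)
    (s₁ s₂ s₃ s₄ s₅ s₆ : ℕ)
    (hs₁ : s₁ < q ∧ s₁ % p₁ = 1 % p₁ ∧ s₁ % p₂ = 0 ∧ s₁ % p₃ = 0)
    (hs₂ : s₂ < q ∧ s₂ % p₁ = 0 ∧ s₂ % p₂ = 1 % p₂ ∧ s₂ % p₃ = 0)
    (hs₃ : s₃ < q ∧ s₃ % p₁ = 0 ∧ s₃ % p₂ = 0 ∧ s₃ % p₃ = 1 % p₃)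
    (hs₄ : s₄ < q ∧ s₄ % p₁ = 1 % p₁ ∧ s₄ % p₂ = 2 % p₂ ∧ s₄ % p₃ = 3 % p₃)
    (hs₅ : s₅ < q ∧ s₅ % p₁ = 3 % p₁ ∧ s₅ % p₂ = 1 % p₂ ∧ s₅ % p₃ = 2 % p₃)
    (hs₆ : s₆ < q ∧ s₆ % p₁ = 2 % p₁ ∧ s₆ % p₂ = 3 % p₂ ∧ s₆ % p₃ = 1 % p₃)
    (z : ℤ) :
    ((z ≡ (s₁ : ℤ) [ZMOD (q : ℤ)] ∨ z ≡ (s₂ : ℤ) [ZMOD (q : ℤ)] ∨ z ≡ (s₃ : ℤ) [ZMOD (q : ℤ)]) →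
      Int.gcd (q : ℤ) ((s₁ : ℤ) - z) + Int.gcd (q : ℤ) ((s₂ : ℤ) - z) +
      Int.gcd (q : ℤ) ((s₃ : ℤ) - z) + Int.gcd (q : ℤ) ((s₄ : ℤ) - z) +
      Int.gcd (q : ℤ) ((s₅ : ℤ) - z) + Int.gcd (q : ℤ) ((s₆ : ℤ) - z)
        = q + 2 + p₁ + p₂ + p₃) ∧
    (¬ (z ≡ (s₁ : ℤ) [ZMOD (q : ℤ)] ∨ z ≡ (s₂ : ℤ) [ZMOD (q : ℤ)] ∨ z ≡ (s₃ : ℤ) [ZMOD (q : ℤ)]) →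
      Int.gcd (q : ℤ) ((s₁ : ℤ) - z) + Int.gcd (q : ℤ) ((s₂ : ℤ) - z) +
      Int.gcd (q : ℤ) ((s₃ : ℤ) - z) + Int.gcd (q : ℤ) ((s₄ : ℤ) - z) +
      Int.gcd (q : ℤ) ((s₅ : ℤ) - z) + Int.gcd (q : ℤ) ((s₆ : ℤ) - z)
        < q + 2 + p₁ + p₂ + p₃) := by
  obtain ⟨-, r11, r12, r13⟩ := hs₁
  obtain ⟨-, r21, r22, r23⟩ := hs₂
  obtain ⟨-, r31, r32, r33⟩ := hs₃
  obtain ⟨-, r41, r42, r43⟩ := hs₄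
  obtain ⟨-, r51, r52, r53⟩ := hs₅
  obtain ⟨-, r61, r62, r63⟩ := hs₆
  subst hq
  have hne12 : p₁ ≠ p₂ := h12.ne
  have hne13 : p₁ ≠ p₃ := (h12.trans h23).ne
  have hne23 : p₂ ≠ p₃ := h23.ne
  have h7 : 7 ≤ p₁ := by
    by_contra hcon
    push_neg at hcon
    have hle : p₁ ^ 3 ≤ 6 * p₁ ^ 2 := by nlinarith
    have h2 : p₁ ^ 2 ≤ p₃ ^ 2 := Nat.pow_le_pow_left (by omega) 2
    linarith
  have h7₂ : 7 ≤ p₂ := by omega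
  have h7₃ : 7 ≤ p₃ := by omega
  -- divisibility transfer lemmas
  have z0 : ∀ p : ℕ, (0:ℕ) % p = 0 % p := fun p => rfl
  have e11 : ((p₁:ℤ) ∣ (s₁:ℤ) - z) ↔ ((p₁:ℤ) ∣ z - 1) := by simpa using rowIff r11 z
  have e12 : ((p₂:ℤ) ∣ (s₁:ℤ) - z) ↔ ((p₂:ℤ) ∣ z) := by
    simpa using rowIff (r12.trans (Nat.zero_mod p₂).symm) z
  have e13 : ((p₃:ℤ) ∣ (s₁:ℤ) - z) ↔ ((p₃:ℤ) ∣ z) := by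
    simpa using rowIff (r13.trans (Nat.zero_mod p₃).symm) z
  have e21 : ((p₁:ℤ) ∣ (s₂:ℤ) - z) ↔ ((p₁:ℤ) ∣ z) := by
    simpa using rowIff (r21.trans (Nat.zero_mod p₁).symm) z
  have e22 : ((p₂:ℤ) ∣ (s₂:ℤ) - z) ↔ ((p₂:ℤ) ∣ z - 1) := by simpa using rowIff r22 z
  have e23 : ((p₃:ℤ) ∣ (s₂:ℤ) - z) ↔ ((p₃:ℤ) ∣ z) := by
    simpa using rowIff (r23.trans (Nat.zero_mod p₃).symm) z
  have e31 : ((p₁:ℤ) ∣ (s₃:ℤ) - z) ↔ ((p₁:ℤ) ∣ z) := by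
    simpa using rowIff (r31.trans (Nat.zero_mod p₁).symm) z
  have e32 : ((p₂:ℤ) ∣ (s₃:ℤ) - z) ↔ ((p₂:ℤ) ∣ z) := by
    simpa using rowIff (r32.trans (Nat.zero_mod p₂).symm) z
  have e33 : ((p₃:ℤ) ∣ (s₃:ℤ) - z) ↔ ((p₃:ℤ) ∣ z - 1) := by simpa using rowIff r33 z
  have e41 : ((p₁:ℤ) ∣ (s₄:ℤ) - z) ↔ ((p₁:ℤ) ∣ z - 1) := by simpa using rowIff r41 z
  have e42 : ((p₂:ℤ) ∣ (s₄:ℤ) - z) ↔ ((p₂:ℤ) ∣ z - 2) := by simpa using rowIff r42 z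
  have e43 : ((p₃:ℤ) ∣ (s₄:ℤ) - z) ↔ ((p₃:ℤ) ∣ z - 3) := by simpa using rowIff r43 z
  have e51 : ((p₁:ℤ) ∣ (s₅:ℤ) - z) ↔ ((p₁:ℤ) ∣ z - 3) := by simpa using rowIff r51 z
  have e52 : ((p₂:ℤ) ∣ (s₅:ℤ) - z) ↔ ((p₂:ℤ) ∣ z - 1) := by simpa using rowIff r52 z
  have e53 : ((p₃:ℤ) ∣ (s₅:ℤ) - z) ↔ ((p₃:ℤ) ∣ z - 2) := by simpa using rowIff r53 z
  have e61 : ((p₁:ℤ) ∣ (s₆:ℤ) - z) ↔ ((p₁:ℤ) ∣ z - 2) := by simpa using rowIff r61 z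
  have e62 : ((p₂:ℤ) ∣ (s₆:ℤ) - z) ↔ ((p₂:ℤ) ∣ z - 3) := by simpa using rowIff r62 z
  have e63 : ((p₃:ℤ) ∣ (s₆:ℤ) - z) ↔ ((p₃:ℤ) ∣ z - 1) := by simpa using rowIff r63 z
  -- gcd rewrites
  have g1 : Int.gcd ((p₁*p₂*p₃:ℕ):ℤ) ((s₁:ℤ) - z) =
      (if (p₁:ℤ) ∣ z - 1 then p₁ else 1) * (if (p₂:ℤ) ∣ z then p₂ else 1) *
      (if (p₃:ℤ) ∣ z then p₃ else 1) := by
    rw [gcd3 hp₁ hp₂ hp₃ hne12 hne13 hne23]; simp only [e11, e12, e13]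
  have g2 : Int.gcd ((p₁*p₂*p₃:ℕ):ℤ) ((s₂:ℤ) - z) =
      (if (p₁:ℤ) ∣ z then p₁ else 1) * (if (p₂:ℤ) ∣ z - 1 then p₂ else 1) *
      (if (p₃:ℤ) ∣ z then p₃ else 1) := by
    rw [gcd3 hp₁ hp₂ hp₃ hne12 hne13 hne23]; simp only [e21, e22, e23]
  have g3 : Int.gcd ((p₁*p₂*p₃:ℕ):ℤ) ((s₃:ℤ) - z) =
      (if (p₁:ℤ) ∣ z then p₁ else 1) * (if (p₂:ℤ) ∣ z then p₂ else 1) *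
      (if (p₃:ℤ) ∣ z - 1 then p₃ else 1) := by
    rw [gcd3 hp₁ hp₂ hp₃ hne12 hne13 hne23]; simp only [e31, e32, e33]
  have g4 : Int.gcd ((p₁*p₂*p₃:ℕ):ℤ) ((s₄:ℤ) - z) =
      (if (p₁:ℤ) ∣ z - 1 then p₁ else 1) * (if (p₂:ℤ) ∣ z - 2 then p₂ else 1) *
      (if (p₃:ℤ) ∣ z - 3 then p₃ else 1) := by
    rw [gcd3 hp₁ hp₂ hp₃ hne12 hne13 hne23]; simp only [e41, e42, e43]
  have g5 : Int.gcd ((p₁*p₂*p₃:ℕ):ℤ) ((s₅:ℤ) - z) =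
      (if (p₁:ℤ) ∣ z - 3 then p₁ else 1) * (if (p₂:ℤ) ∣ z - 1 then p₂ else 1) *
      (if (p₃:ℤ) ∣ z - 2 then p₃ else 1) := by
    rw [gcd3 hp₁ hp₂ hp₃ hne12 hne13 hne23]; simp only [e51, e52, e53]
  have g6 : Int.gcd ((p₁*p₂*p₃:ℕ):ℤ) ((s₆:ℤ) - z) =
      (if (p₁:ℤ) ∣ z - 2 then p₁ else 1) * (if (p₂:ℤ) ∣ z - 3 then p₂ else 1) *
      (if (p₃:ℤ) ∣ z - 1 then p₃ else 1) := by
    rw [gcd3 hp₁ hp₂ hp₃ hne12 hne13 hne23]; simp only [e61, e62, e63]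
  -- CRT for the modulus
  have cop12 : IsCoprime (p₁:ℤ) (p₂:ℤ) := by
    rw [Int.isCoprime_iff_gcd_eq_one, Int.gcd_natCast_natCast]
    exact (Nat.coprime_primes hp₁ hp₂).mpr hne12
  have cop13 : IsCoprime (p₁:ℤ) (p₃:ℤ) := by
    rw [Int.isCoprime_iff_gcd_eq_one, Int.gcd_natCast_natCast]
    exact (Nat.coprime_primes hp₁ hp₃).mpr hne13
  have cop23 : IsCoprime (p₂:ℤ) (p₃:ℤ) := by
    rw [Int.isCoprime_iff_gcd_eq_one, Int.gcd_natCast_natCast]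
    exact (Nat.coprime_primes hp₂ hp₃).mpr hne23
  have qdvd : ∀ m : ℤ, (((p₁*p₂*p₃:ℕ):ℤ) ∣ m) ↔
      ((p₁:ℤ) ∣ m ∧ (p₂:ℤ) ∣ m ∧ (p₃:ℤ) ∣ m) := by
    intro m
    constructor
    · intro h
      refine ⟨dvd_trans ?_ h, dvd_trans ?_ h, dvd_trans ?_ h⟩
      · exact ⟨(p₂*p₃ : ℕ), by push_cast; ring⟩
      · exact ⟨(p₁*p₃ : ℕ), by push_cast; ring⟩
      · exact ⟨(p₁*p₂ : ℕ), by push_cast; ring⟩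
    · rintro ⟨d1, d2, d3⟩
      push_cast
      exact (IsCoprime.mul_left cop13 cop23).mul_dvd (cop12.mul_dvd d1 d2) d3
  have m1 : (z ≡ (s₁:ℤ) [ZMOD ((p₁*p₂*p₃:ℕ):ℤ)]) ↔
      ((p₁:ℤ) ∣ z - 1 ∧ (p₂:ℤ) ∣ z ∧ (p₃:ℤ) ∣ z) := by
    rw [Int.modEq_iff_dvd, qdvd ((s₁:ℤ) - z), e11, e12, e13]
  have m2 : (z ≡ (s₂:ℤ) [ZMOD ((p₁*p₂*p₃:ℕ):ℤ)]) ↔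
      ((p₁:ℤ) ∣ z ∧ (p₂:ℤ) ∣ z - 1 ∧ (p₃:ℤ) ∣ z) := by
    rw [Int.modEq_iff_dvd, qdvd ((s₂:ℤ) - z), e21, e22, e23]
  have m3 : (z ≡ (s₃:ℤ) [ZMOD ((p₁*p₂*p₃:ℕ):ℤ)]) ↔
      ((p₁:ℤ) ∣ z ∧ (p₂:ℤ) ∣ z ∧ (p₃:ℤ) ∣ z - 1) := by
    rw [Int.modEq_iff_dvd, qdvd ((s₃:ℤ) - z), e31, e32, e33]
  rw [g1, g2, g3, g4, g5, g6, m1, m2, m3]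
  -- arithmetic facts
  have f1 : 1 ≤ p₂ * p₃ := Nat.one_le_iff_ne_zero.mpr (Nat.mul_ne_zero hp₂.pos.ne' hp₃.pos.ne')
  have f3 : p₂ ≤ p₂ * p₃ := Nat.le_mul_of_pos_right p₂ hp₃.pos
  have f2 : p₁ ≤ p₂ * p₃ := le_trans h12.le f3
  have f4 : p₃ ≤ p₂ * p₃ := Nat.le_mul_of_pos_left p₃ hp₂.pos
  have f5 : p₁ * p₂ ≤ p₂ * p₃ := Nat.mul_le_mul h12.le h23.le
  have f6 : p₁ * p₃ ≤ p₂ * p₃ := Nat.mul_le_mul h12.le le_rfl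
  have hkey : 6 * (p₂ * p₃) < p₁ * p₂ * p₃ := by
    have h6 : 6 < p₁ := by omega
    calc 6 * (p₂ * p₃) < p₁ * (p₂ * p₃) :=
          Nat.mul_lt_mul_of_pos_right h6 (Nat.mul_pos hp₂.pos hp₃.pos)
      _ = p₁ * p₂ * p₃ := by ring
  clear g1 g2 g3 g4 g5 g6 m1 m2 m3 e11 e12 e13 e21 e22 e23 e31 e32 e33 e41 e42 e43 e51 e52 e53 e61 e62 e63 qdvd cop12 cop13 cop23 z0 r11 r12 r13 r21 r22 r23 r31 r32 r33 r41 r42 r43 r51 r52 r53 r61 r62 r63 hbig hp₁ hp₂ hp₃ hne12 hne13 hne23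
  rcases colCases h7 z with ⟨a1,b1,c1,d1⟩|⟨a1,b1,c1,d1⟩|⟨a1,b1,c1,d1⟩|⟨a1,b1,c1,d1⟩|⟨a1,b1,c1,d1⟩ <;>
    rcases colCases h7₂ z with ⟨a2,b2,c2,d2⟩|⟨a2,b2,c2,d2⟩|⟨a2,b2,c2,d2⟩|⟨a2,b2,c2,d2⟩|⟨a2,b2,c2,d2⟩ <;>
    rcases colCases h7₃ z with ⟨a3,b3,c3,d3⟩|⟨a3,b3,c3,d3⟩|⟨a3,b3,c3,d3⟩|⟨a3,b3,c3,d3⟩|⟨a3,b3,c3,d3⟩ <;>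
    simp only [a1,b1,c1,d1,a2,b2,c2,d2,a3,b3,c3,d3, if_true, if_false, eq_self_iff_true,
      iff_true, iff_false, not_true, not_false_iff, true_and, and_true, false_and, and_false,
      true_or, or_true, false_or, or_false, mul_one, one_mul, true_implies, false_implies,
      not_false_eq_true, implies_true, and_self, not_true_eq_false, ite_true, ite_false] <;>
    linarith [f1, f2, f3, f4, f5, f6, hkey]
end
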